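/- arXiv:1207.4254 — 5 statements merged into one kernel-verified Lean document; each statement's English description precedes it below -/
import Mathlib

section
/- Let h ~ Gamma(N_s,1) with positive integer N_s, independent of a nonnegative random variable X whose Laplace transform L(s) = E[e^{-sX}] is finite for all s > 0. Then for η > 0, P(h > η X) = Σ_{k=0}^{N_s-1} ((-η)^k/k!) L^{(k)}(η), where L^{(k)} denotes the k-th derivative. -/
open MeasureTheory Real Finset

private lemma hasDerivAt_term (k : ℕ) (t : ℝ) :
    HasDerivAt (fun t : ℝ => t ^ k * Real.exp (-t) / (Nat.factorial k : ℝ))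
      (((k : ℝ) * t ^ (k - 1) * Real.exp (-t) - t ^ k * Real.exp (-t)) / (Nat.factorial k : ℝ))
      t := by
  have he : HasDerivAt (fun t : ℝ => Real.exp (-t)) (-Real.exp (-t)) t := by
    exact (hasDerivAt_neg t).exp.congr_deriv (by ring)
  have := ((hasDerivAt_pow k t).mul he).div_const (Nat.factorial k : ℝ)
  refine this.congr_deriv ?_
  ring

private lemma sum_hasDeriv : ∀ n : ℕ, 1 ≤ n → ∀ t : ℝ,
    HasDerivAt (fun t : ℝ => ∑ k ∈ Finset.range n, t ^ k * Real.exp (-t) / (Nat.factorial k : ℝ))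
      (-(t ^ (n - 1) * Real.exp (-t) / (Nat.factorial (n - 1) : ℝ))) t := by
  intro n hn
  induction n, hn using Nat.le_induction with
  | base =>
    intro t
    have he : HasDerivAt (fun t : ℝ => Real.exp (-t)) (-Real.exp (-t)) t := by
      exact (hasDerivAt_neg t).exp.congr_deriv (by ring)
    have hfun : (fun t : ℝ => ∑ k ∈ Finset.range 1,
        t ^ k * Real.exp (-t) / (Nat.factorial k : ℝ)) = fun t : ℝ => Real.exp (-t) := by
      funext t; simp
    rw [hfun]
    simpa using he
  | succ n hn ih =>
    intro t
    have h := (ih t).add (hasDerivAt_term n t)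
    have hfun : (fun t : ℝ => ∑ k ∈ Finset.range (n + 1), t ^ k * Real.exp (-t) / (Nat.factorial k : ℝ))
        = fun t : ℝ => (∑ k ∈ Finset.range n, t ^ k * Real.exp (-t) / (Nat.factorial k : ℝ))
          + t ^ n * Real.exp (-t) / (Nat.factorial n : ℝ) := by
      funext t
      rw [Finset.sum_range_succ]
    rw [hfun]
    refine h.congr_deriv ?_
    have hfac : (n : ℝ) * (Nat.factorial (n - 1) : ℝ) = (Nat.factorial n : ℝ) := by
      exact_mod_cast Nat.mul_factorial_pred (by omega)
    have hfac1 : (0:ℝ) < (Nat.factorial (n-1) : ℝ) := by positivity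
    have hfac2 : (0:ℝ) < (Nat.factorial n : ℝ) := by positivity
    have hpow : t ^ n = t ^ (n - 1) * t := by
      conv_lhs => rw [← Nat.sub_add_cancel hn]
      rw [pow_succ]
    simp only [Nat.add_sub_cancel]
    rw [← hfac, hpow]
    field_simp
    ring

private lemma intGamma (n : ℕ) (hn : 0 < n) (x : ℝ) (hx : 0 ≤ x) :
    (∫ t in Set.Ioi x, t ^ (n - 1) * Real.exp (-t) / (Nat.factorial (n - 1) : ℝ))
      = ∑ k ∈ Finset.range n, x ^ k * Real.exp (-x) / (Nat.factorial k : ℝ) := by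
  set F : ℝ → ℝ := fun t => -∑ k ∈ Finset.range n, t ^ k * Real.exp (-t) / (Nat.factorial k : ℝ)
    with hFdef
  have hF : ∀ t, HasDerivAt F (t ^ (n - 1) * Real.exp (-t) / (Nat.factorial (n - 1) : ℝ)) t := by
    intro t
    exact (sum_hasDeriv n hn t).neg.congr_deriv (neg_neg _)
  have htend : Filter.Tendsto F Filter.atTop (nhds 0) := by
    have : Filter.Tendsto (fun t : ℝ => ∑ k ∈ Finset.range n,
        t ^ k * Real.exp (-t) / (Nat.factorial k : ℝ)) Filter.atTop (nhds 0) := by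
      have := tendsto_finset_sum (Finset.range n)
        (f := fun k (t : ℝ) => t ^ k * Real.exp (-t) / (Nat.factorial k : ℝ))
        (a := fun _ => (0:ℝ)) (x := Filter.atTop) ?_
      · simpa using this
      · intro k _
        simpa using (Real.tendsto_pow_mul_exp_neg_atTop_nhds_zero k).div_const
          (Nat.factorial k : ℝ)
    simpa using this.neg
  have := integral_Ioi_of_hasDerivAt_of_nonneg
    (g := F) (g' := fun t => t ^ (n - 1) * Real.exp (-t) / (Nat.factorial (n - 1) : ℝ))
    (a := x) (l := 0)
    (hF x).continuousAt.continuousWithinAt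
    (fun t _ => hF t)
    (fun t ht => by
      have h0 : (0:ℝ) < t := lt_of_le_of_lt hx ht
      positivity)
    htend
  rw [this, hFdef]
  simp

section Main

variable {Ω : Type*} [MeasurableSpace Ω] (μ : Measure Ω) [IsProbabilityMeasure μ]
  (X : Ω → ℝ)

private lemma intX (hXmeas : Measurable X) (hX : ∀ ω, 0 ≤ X ω)
    (hInt : ∀ s : ℝ, 0 < s → Integrable (fun ω => Real.exp (-(s * X ω))) μ)
    (k : ℕ) (s : ℝ) (hs : 0 < s) :
    Integrable (fun ω => X ω ^ k * Real.exp (-(s * X ω))) μ := by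
  have hint2 := hInt (s / 2) (by positivity)
  have hC : Integrable (fun ω => (Nat.factorial k : ℝ) * (2 / s) ^ k
      * Real.exp (-(s / 2 * X ω))) μ := by
    simpa [mul_assoc] using hint2.const_mul ((Nat.factorial k : ℝ) * (2 / s) ^ k)
  refine hC.mono' ?_ ?_
  · exact ((hXmeas.pow_const k).mul
      ((hXmeas.const_mul s).neg.exp)).aestronglyMeasurable
  · filter_upwards with ω
    have hx := hX ω
    have h1 : (s / 2 * X ω) ^ k / (Nat.factorial k : ℝ) ≤ Real.exp (s / 2 * X ω) :=
      Real.pow_div_factorial_le_exp _ (by positivity) k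
    have h2 : X ω ^ k ≤ (Nat.factorial k : ℝ) * (2 / s) ^ k * Real.exp (s / 2 * X ω) := by
      have h1' : (s / 2) ^ k * X ω ^ k ≤ (Nat.factorial k : ℝ) * Real.exp (s / 2 * X ω) := by
        rw [← mul_pow]
        rw [div_le_iff₀ (by positivity : (0:ℝ) < (Nat.factorial k : ℝ))] at h1
        linarith [h1]
      have key : X ω ^ k = (2 / s) ^ k * ((s / 2) ^ k * X ω ^ k) := by
        rw [← mul_assoc, ← mul_pow]
        field_simp
        simp
      rw [key]
      calc (2 / s) ^ k * ((s / 2) ^ k * X ω ^ k)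
          ≤ (2 / s) ^ k * ((Nat.factorial k : ℝ) * Real.exp (s / 2 * X ω)) := by
            apply mul_le_mul_of_nonneg_left h1' (by positivity)
        _ = (Nat.factorial k : ℝ) * (2 / s) ^ k * Real.exp (s / 2 * X ω) := by ring
    have hnorm : ‖X ω ^ k * Real.exp (-(s * X ω))‖ = X ω ^ k * Real.exp (-(s * X ω)) := by
      rw [Real.norm_eq_abs, abs_of_nonneg (by positivity)]
    rw [hnorm]
    calc X ω ^ k * Real.exp (-(s * X ω))
        ≤ ((Nat.factorial k : ℝ) * (2 / s) ^ k * Real.exp (s / 2 * X ω))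
          * Real.exp (-(s * X ω)) :=
          mul_le_mul_of_nonneg_right h2 (Real.exp_nonneg _)
      _ = (Nat.factorial k : ℝ) * (2 / s) ^ k * Real.exp (-(s / 2 * X ω)) := by
          rw [mul_assoc, ← Real.exp_add]
          congr 2
          ring

private lemma hasDeriv_G (hXmeas : Measurable X) (hX : ∀ ω, 0 ≤ X ω)
    (hInt : ∀ s : ℝ, 0 < s → Integrable (fun ω => Real.exp (-(s * X ω))) μ)
    (k : ℕ) (s : ℝ) (hs : 0 < s) :
    HasDerivAt (fun x : ℝ => ∫ ω, (-X ω) ^ k * Real.exp (-(x * X ω)) ∂μ)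
      (∫ ω, (-X ω) ^ (k + 1) * Real.exp (-(s * X ω)) ∂μ) s := by
  have hmeas : ∀ (j : ℕ) (x : ℝ),
      AEStronglyMeasurable (fun ω => (-X ω) ^ j * Real.exp (-(x * X ω))) μ := by
    intro j x
    exact ((hXmeas.neg.pow_const j).mul ((hXmeas.const_mul x).neg.exp)).aestronglyMeasurable
  have hintj : ∀ (j : ℕ) (x : ℝ), 0 < x →
      Integrable (fun ω => (-X ω) ^ j * Real.exp (-(x * X ω))) μ := by
    intro j x hx
    have : (fun ω => (-X ω) ^ j * Real.exp (-(x * X ω)))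
        = fun ω => (-1 : ℝ) ^ j * (X ω ^ j * Real.exp (-(x * X ω))) := by
      funext ω
      rw [neg_pow]
      ring
    rw [this]
    exact (intX μ X hXmeas hX hInt j x hx).const_mul _
  have key := hasDerivAt_integral_of_dominated_loc_of_deriv_le (μ := μ)
    (F := fun x ω => (-X ω) ^ k * Real.exp (-(x * X ω)))
    (F' := fun x ω => (-X ω) ^ (k + 1) * Real.exp (-(x * X ω)))
    (x₀ := s) (bound := fun ω => X ω ^ (k + 1) * Real.exp (-(s / 2 * X ω)))
    (Metric.ball_mem_nhds s (half_pos hs))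
    (Filter.Eventually.of_forall fun x => hmeas k x)
    (hintj k s hs)
    (hmeas (k + 1) s)
    ?_ ?_ ?_
  · exact key.2
  · filter_upwards with ω
    intro x hx
    have hx2 : s / 2 ≤ x := by
      rw [Metric.mem_ball, Real.dist_eq, abs_lt] at hx
      linarith
    have hXω := hX ω
    have hn1 : ‖(-X ω) ^ (k + 1) * Real.exp (-(x * X ω))‖
        = X ω ^ (k + 1) * Real.exp (-(x * X ω)) := by
      rw [norm_mul, norm_pow, norm_neg, Real.norm_eq_abs, Real.norm_eq_abs,
        abs_of_nonneg hXω, Real.abs_exp]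
    rw [hn1]
    apply mul_le_mul_of_nonneg_left _ (by positivity)
    apply Real.exp_le_exp.2
    nlinarith
  · exact intX μ X hXmeas hX hInt (k + 1) (s / 2) (by positivity)
  · filter_upwards with ω
    intro x hx
    have hb : HasDerivAt (fun x : ℝ => Real.exp (-(x * X ω)))
        (Real.exp (-(x * X ω)) * (-X ω)) x := by
      have h1 : HasDerivAt (fun x : ℝ => -(x * X ω)) (-X ω) x :=
        (hasDerivAt_mul_const (X ω)).neg
      exact (Real.hasDerivAt_exp _).comp x h1
    have := hb.const_mul ((-X ω) ^ k)
    refine this.congr_deriv ?_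
    rw [pow_succ]
    ring

private lemma iter_deriv (hXmeas : Measurable X) (hX : ∀ ω, 0 ≤ X ω)
    (hInt : ∀ s : ℝ, 0 < s → Integrable (fun ω => Real.exp (-(s * X ω))) μ)
    (k : ℕ) : ∀ s : ℝ, 0 < s →
    iteratedDeriv k (fun s : ℝ => ∫ ω, Real.exp (-(s * X ω)) ∂μ) s
      = ∫ ω, (-X ω) ^ k * Real.exp (-(s * X ω)) ∂μ := by
  induction k with
  | zero => intro s hs; simp [iteratedDeriv_zero]
  | succ k ih =>
    intro s hs
    rw [iteratedDeriv_succ]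
    have heq : iteratedDeriv k (fun s : ℝ => ∫ ω, Real.exp (-(s * X ω)) ∂μ)
        =ᶠ[nhds s] fun x : ℝ => ∫ ω, (-X ω) ^ k * Real.exp (-(x * X ω)) ∂μ := by
      filter_upwards [Ioi_mem_nhds hs] with x hx
      exact ih x hx
    rw [heq.deriv_eq, (hasDeriv_G μ X hXmeas hX hInt k s hs).deriv]

end Main

/-- For h ~ Gamma(n,1) independent of a nonnegative random variable X:
P(h > ηX) = Σ_{k<n} ((-η)^k/k!) L^{(k)}(η), where L(s) = E[e^{-sX}].
By independence, P(h > ηX) = E[ Γ(n, ηX)/Γ(n) ]. -/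
theorem success_prob_eq_laplace_derivs {Ω : Type*} [MeasurableSpace Ω]
    (μ : Measure Ω) [IsProbabilityMeasure μ]
    (X : Ω → ℝ) (hXmeas : Measurable X) (hX : ∀ ω, 0 ≤ X ω)
    (hInt : ∀ s : ℝ, 0 < s → Integrable (fun ω => Real.exp (-(s * X ω))) μ)
    (n : ℕ) (hn : 0 < n) (η : ℝ) (hη : 0 < η) :
    (∫ ω, (∫ t in Set.Ioi (η * X ω),
        t ^ (n - 1) * Real.exp (-t) / ((Nat.factorial (n - 1)) : ℝ)) ∂μ) =
    ∑ k ∈ Finset.range n, (-η) ^ k / ((Nat.factorial k) : ℝ) *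
        iteratedDeriv k (fun s : ℝ => ∫ ω, Real.exp (-(s * X ω)) ∂μ) η := by
  have hIntTerm : ∀ k : ℕ,
      Integrable (fun ω => (η * X ω) ^ k * Real.exp (-(η * X ω)) / (Nat.factorial k : ℝ)) μ := by
    intro k
    have : (fun ω => (η * X ω) ^ k * Real.exp (-(η * X ω)) / (Nat.factorial k : ℝ))
        = fun ω => (η ^ k / (Nat.factorial k : ℝ)) * (X ω ^ k * Real.exp (-(η * X ω))) := by
      funext ω
      rw [mul_pow]
      ring
    rw [this]
    exact (intX μ X hXmeas hX hInt k η hη).const_mul _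
  have hL : ∀ ω, (∫ t in Set.Ioi (η * X ω),
      t ^ (n - 1) * Real.exp (-t) / ((Nat.factorial (n - 1)) : ℝ))
      = ∑ k ∈ Finset.range n, (η * X ω) ^ k * Real.exp (-(η * X ω)) / (Nat.factorial k : ℝ) :=
    fun ω => intGamma n hn (η * X ω) (mul_nonneg hη.le (hX ω))
  calc (∫ ω, (∫ t in Set.Ioi (η * X ω),
        t ^ (n - 1) * Real.exp (-t) / ((Nat.factorial (n - 1)) : ℝ)) ∂μ)
      = ∫ ω, ∑ k ∈ Finset.range n,
          (η * X ω) ^ k * Real.exp (-(η * X ω)) / (Nat.factorial k : ℝ) ∂μ := by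
        exact integral_congr_ae (Filter.Eventually.of_forall hL)
    _ = ∑ k ∈ Finset.range n, ∫ ω,
          (η * X ω) ^ k * Real.exp (-(η * X ω)) / (Nat.factorial k : ℝ) ∂μ :=
        integral_finset_sum _ (fun k _ => hIntTerm k)
    _ = ∑ k ∈ Finset.range n, (-η) ^ k / ((Nat.factorial k) : ℝ) *
          iteratedDeriv k (fun s : ℝ => ∫ ω, Real.exp (-(s * X ω)) ∂μ) η := by
        refine Finset.sum_congr rfl fun k _ => ?_
        rw [iter_deriv μ X hXmeas hX hInt k η hη, ← integral_const_mul]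
        refine integral_congr_ae (Filter.Eventually.of_forall fun ω => ?_)
        have hp : (-η) ^ k * (-X ω) ^ k = (η * X ω) ^ k := by
          rw [← mul_pow, neg_mul_neg]
        simp only [div_mul_eq_mul_div, ← mul_assoc, hp]
end

section
/- Let h ~ Gamma(N_s,1) with positive integer N_s, independent of a nonnegative random variable X with finite Laplace transform, and let η > (N_s - 1)/e. Then P(h > η X) ≤ Σ_{k=0}^{N_s-1} (η^k/k!) E[e^{-(η - k/e) X}]. -/
open MeasureTheory Real Finset

private lemma expneg_deriv (t : ℝ) : HasDerivAt (fun t : ℝ => Real.exp (-t)) (-Real.exp (-t)) t := by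
  simpa using ((hasDerivAt_id t).neg.exp)

private lemma hasDerivAt_gammaSum (m : ℕ) (t : ℝ) :
    HasDerivAt (fun s => ∑ k ∈ Finset.range (m + 1),
        s ^ k * Real.exp (-s) / (Nat.factorial k : ℝ))
      (-(t ^ m * Real.exp (-t) / (Nat.factorial m : ℝ))) t := by
  induction m with
  | zero =>
      simp only [zero_add, Finset.sum_range_one, pow_zero, one_mul, Nat.factorial_zero, Nat.cast_one,
        div_one]
      exact expneg_deriv t
  | succ m ih =>
      have h1 := ((hasDerivAt_pow (m + 1) t).mul (expneg_deriv t)).div_const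
        ((Nat.factorial (m + 1) : ℝ))
      have h2 := ih.add h1
      have hfe : (fun s : ℝ => ∑ k ∈ Finset.range (m + 2),
          s ^ k * Real.exp (-s) / (Nat.factorial k : ℝ))
          = fun s : ℝ => (∑ k ∈ Finset.range (m + 1),
            s ^ k * Real.exp (-s) / (Nat.factorial k : ℝ))
            + s ^ (m + 1) * Real.exp (-s) / (Nat.factorial (m + 1) : ℝ) := by
        funext s; rw [Finset.sum_range_succ]
      rw [hfe]
      refine HasDerivAt.congr_deriv h2 ?_
      have hm : (Nat.factorial (m + 1) : ℝ) = ((m : ℝ) + 1) * (Nat.factorial m : ℝ) := by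
        rw [Nat.factorial_succ]; push_cast; ring
      have hm0 : (Nat.factorial m : ℝ) ≠ 0 := by positivity
      simp only [Nat.add_sub_cancel, hm, Nat.cast_succ]
      field_simp [hm]
      ring

private lemma integral_gamma_tail (m : ℕ) (a : ℝ) (ha : 0 ≤ a) :
    (∫ t in Set.Ioi a, t ^ m * Real.exp (-t) / (Nat.factorial m : ℝ))
      = ∑ k ∈ Finset.range (m + 1), a ^ k * Real.exp (-a) / (Nat.factorial k : ℝ) := by
  have h := integral_Ioi_of_hasDerivAt_of_nonneg'
      (g := fun s => -∑ k ∈ Finset.range (m + 1),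
        s ^ k * Real.exp (-s) / (Nat.factorial k : ℝ))
      (g' := fun t => t ^ m * Real.exp (-t) / (Nat.factorial m : ℝ)) (a := a) (l := 0)
      (fun x _ => by simpa using (hasDerivAt_gammaSum m x).fun_neg)
      (fun x hx => by
        have hx0 : (0 : ℝ) ≤ x := le_trans ha (le_of_lt hx)
        positivity)
      ?_
  · rw [h]; ring
  · have h0 : Filter.Tendsto (fun s : ℝ => ∑ k ∈ Finset.range (m + 1),
        s ^ k * Real.exp (-s) / (Nat.factorial k : ℝ)) Filter.atTop (nhds 0) := by
      have := tendsto_finset_sum (Finset.range (m + 1))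
        (fun k (_ : k ∈ Finset.range (m + 1)) =>
          (Real.tendsto_pow_mul_exp_neg_atTop_nhds_zero k).div_const ((Nat.factorial k : ℝ)))
      simpa using this
    simpa using h0.neg

private lemma mul_exp_le_one {x : ℝ} (hx : 0 ≤ x) : x * Real.exp (-(x / Real.exp 1)) ≤ 1 := by
  have h2 := Real.add_one_le_exp (x / Real.exp 1 - 1)
  have h3 : x / Real.exp 1 ≤ Real.exp (x / Real.exp 1 - 1) := by linarith
  have he : (0 : ℝ) < Real.exp 1 := Real.exp_pos 1
  have h1 : x ≤ Real.exp (x / Real.exp 1) := by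
    calc x = (x / Real.exp 1) * Real.exp 1 := by field_simp
      _ ≤ Real.exp (x / Real.exp 1 - 1) * Real.exp 1 :=
        mul_le_mul_of_nonneg_right h3 he.le
      _ = Real.exp (x / Real.exp 1) := by rw [← Real.exp_add]; ring_nf
  calc x * Real.exp (-(x / Real.exp 1))
      ≤ Real.exp (x / Real.exp 1) * Real.exp (-(x / Real.exp 1)) :=
        mul_le_mul_of_nonneg_right h1 (Real.exp_pos _).le
    _ = 1 := by rw [← Real.exp_add]; simp

private lemma pow_mul_exp_le_one {x : ℝ} (hx : 0 ≤ x) (k : ℕ) :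
    x ^ k * Real.exp (-((k : ℝ) / Real.exp 1 * x)) ≤ 1 := by
  have h : -((k : ℝ) / Real.exp 1 * x) = (k : ℕ) * (-(x / Real.exp 1)) := by push_cast; ring
  rw [h, Real.exp_nat_mul, ← mul_pow]
  exact pow_le_one₀ (by positivity) (mul_exp_le_one hx)

/-- Lemma 2: for h ~ Gamma(n,1) independent of a nonnegative X, and
η > (n-1)/e, P(h > ηX) ≤ Σ_{k<n} (η^k/k!) E[e^{-(η - k/e) X}]. -/
theorem success_prob_upper_bound {Ω : Type*} [MeasurableSpace Ω]
    (μ : Measure Ω) [IsProbabilityMeasure μ]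
    (X : Ω → ℝ) (hXmeas : Measurable X) (hX : ∀ ω, 0 ≤ X ω)
    (hInt : ∀ s : ℝ, 0 < s → Integrable (fun ω => Real.exp (-(s * X ω))) μ)
    (n : ℕ) (hn : 0 < n) (η : ℝ) (hη : ((n : ℝ) - 1) / Real.exp 1 < η) :
    (∫ ω, (∫ t in Set.Ioi (η * X ω),
        t ^ (n - 1) * Real.exp (-t) / ((Nat.factorial (n - 1)) : ℝ)) ∂μ) ≤
    ∑ k ∈ Finset.range n, η ^ k / ((Nat.factorial k) : ℝ) *
        ∫ ω, Real.exp (-((η - (k : ℝ) / Real.exp 1) * X ω)) ∂μ := by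
  have he : (0 : ℝ) < Real.exp 1 := Real.exp_pos 1
  have hn1 : (1 : ℝ) ≤ (n : ℝ) := by exact_mod_cast hn
  have hη0 : 0 < η := lt_of_le_of_lt (div_nonneg (by linarith) he.le) hη
  have hs : ∀ k ∈ Finset.range n, 0 < η - (k : ℝ) / Real.exp 1 := by
    intro k hk
    have hk1 : (k : ℝ) + 1 ≤ (n : ℝ) := by
      exact_mod_cast Nat.succ_le_of_lt (Finset.mem_range.mp hk)
    have h2 : (k : ℝ) / Real.exp 1 ≤ ((n : ℝ) - 1) / Real.exp 1 := by gcongr; linarith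
    linarith
  -- rewrite inner integral
  have hrw : ∀ ω, (∫ t in Set.Ioi (η * X ω),
      t ^ (n - 1) * Real.exp (-t) / ((Nat.factorial (n - 1)) : ℝ))
      = ∑ k ∈ Finset.range n, (η * X ω) ^ k * Real.exp (-(η * X ω)) / (Nat.factorial k : ℝ) := by
    intro ω
    obtain ⟨m, rfl⟩ : ∃ m, n = m + 1 := ⟨n - 1, (Nat.succ_pred_eq_of_pos hn).symm⟩
    simpa using integral_gamma_tail m (η * X ω) (mul_nonneg hη0.le (hX ω))
  -- integrability of the dominating function
  have hgInt : ∀ k ∈ Finset.range n, Integrable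
      (fun ω => η ^ k / (Nat.factorial k : ℝ) *
        Real.exp (-((η - (k : ℝ) / Real.exp 1) * X ω))) μ :=
    fun k hk => (hInt _ (hs k hk)).const_mul _
  have key : ∀ ω, ∀ k ∈ Finset.range n,
      (η * X ω) ^ k * Real.exp (-(η * X ω)) / (Nat.factorial k : ℝ)
      ≤ η ^ k / (Nat.factorial k : ℝ) * Real.exp (-((η - (k : ℝ) / Real.exp 1) * X ω)) := by
    intro ω k _
    have hx := hX ω
    have h1 : Real.exp (-(η * X ω))
        = Real.exp (-((k : ℝ) / Real.exp 1 * X ω)) *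
          Real.exp (-((η - (k : ℝ) / Real.exp 1) * X ω)) := by
      rw [← Real.exp_add]; congr 1; ring
    have heq : (η * X ω) ^ k * Real.exp (-(η * X ω)) / (Nat.factorial k : ℝ)
        = η ^ k / (Nat.factorial k : ℝ) * Real.exp (-((η - (k : ℝ) / Real.exp 1) * X ω)) *
          (X ω ^ k * Real.exp (-((k : ℝ) / Real.exp 1 * X ω))) := by
      rw [mul_pow, h1]; ring
    rw [heq]
    calc η ^ k / (Nat.factorial k : ℝ) * Real.exp (-((η - (k : ℝ) / Real.exp 1) * X ω)) *
          (X ω ^ k * Real.exp (-((k : ℝ) / Real.exp 1 * X ω)))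
        ≤ η ^ k / (Nat.factorial k : ℝ) * Real.exp (-((η - (k : ℝ) / Real.exp 1) * X ω)) * 1 :=
          mul_le_mul_of_nonneg_left (pow_mul_exp_le_one hx k) (by positivity)
      _ = η ^ k / (Nat.factorial k : ℝ) * Real.exp (-((η - (k : ℝ) / Real.exp 1) * X ω)) := by
          rw [mul_one]
  calc (∫ ω, (∫ t in Set.Ioi (η * X ω),
        t ^ (n - 1) * Real.exp (-t) / ((Nat.factorial (n - 1)) : ℝ)) ∂μ)
      = ∫ ω, ∑ k ∈ Finset.range n,
          (η * X ω) ^ k * Real.exp (-(η * X ω)) / (Nat.factorial k : ℝ) ∂μ := by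
        exact integral_congr_ae (Filter.Eventually.of_forall hrw)
    _ ≤ ∫ ω, ∑ k ∈ Finset.range n, η ^ k / (Nat.factorial k : ℝ) *
          Real.exp (-((η - (k : ℝ) / Real.exp 1) * X ω)) ∂μ := by
        apply integral_mono_of_nonneg
        · exact Filter.Eventually.of_forall fun ω => Finset.sum_nonneg fun k _ => by
            have := hX ω; positivity
        · exact integrable_finset_sum _ hgInt
        · exact Filter.Eventually.of_forall fun ω => Finset.sum_le_sum (key ω)
    _ = ∑ k ∈ Finset.range n, η ^ k / ((Nat.factorial k) : ℝ) *
          ∫ ω, Real.exp (-((η - (k : ℝ) / Real.exp 1) * X ω)) ∂μ := by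
        rw [integral_finset_sum _ hgInt]
        exact Finset.sum_congr rfl fun k _ => integral_const_mul _ _
end

section
/- For α > 2, m ≥ 1, and s > 0, the integral over the plane ∫_{ℝ²} (1 - (‖y‖^α/(s + ‖y‖^α))^m) dy equals π s^{2/α} Γ(m + 2/α) Γ(1 - 2/α) / Γ(m). -/
open MeasureTheory Real Set Filter

/-- Real Beta integral on (0,1). -/
lemma shot_noise_real_beta {a b : ℝ} (ha : 0 < a) (hb : 0 < b) :
    ∫ x in (0:ℝ)..1, x ^ (a - 1) * (1 - x) ^ (b - 1)
      = Real.Gamma a * Real.Gamma b / Real.Gamma (a + b) := by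
  have h1 : Complex.Gamma a * Complex.Gamma b
      = Complex.Gamma ((a : ℂ) + b) * Complex.betaIntegral a b :=
    Complex.Gamma_mul_Gamma_eq_betaIntegral (by simpa using ha) (by simpa using hb)
  have h2 : Complex.betaIntegral a b
      = ((∫ x in (0:ℝ)..1, x ^ (a - 1) * (1 - x) ^ (b - 1) : ℝ) : ℂ) := by
    rw [Complex.betaIntegral, ← intervalIntegral.integral_ofReal]
    refine intervalIntegral.integral_congr fun x hx => ?_
    rw [uIcc_of_le zero_le_one] at hx
    push_cast
    rw [Complex.ofReal_cpow hx.1, Complex.ofReal_cpow (by linarith [hx.2])]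
    push_cast
    ring
  have hG : Complex.Gamma ((a : ℂ) + b) ≠ 0 :=
    Complex.Gamma_ne_zero_of_re_pos (by simpa using add_pos ha hb)
  have h3 : ((∫ x in (0:ℝ)..1, x ^ (a - 1) * (1 - x) ^ (b - 1) : ℝ) : ℂ)
      = ((Real.Gamma a * Real.Gamma b / Real.Gamma (a + b) : ℝ) : ℂ) := by
    rw [← h2, eq_comm]
    push_cast [← Complex.Gamma_ofReal]
    rw [eq_comm, eq_div_iff hG, mul_comm, ← h1]
  exact_mod_cast h3
lemma shot_noise_beta_Ioi {a b : ℝ} (ha : 0 < a) (hb : 0 < b)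
    (hbeta : ∫ x in (0:ℝ)..1, x ^ (a - 1) * (1 - x) ^ (b - 1)
      = Real.Gamma a * Real.Gamma b / Real.Gamma (a + b)) :
    ∫ x in Ioi (0:ℝ), x ^ (a - 1) * (1 + x) ^ (-(a + b))
      = Real.Gamma a * Real.Gamma b / Real.Gamma (a + b) := by
  set g : ℝ → ℝ := fun x => x ^ (a - 1) * (1 + x) ^ (-(a + b)) with hg
  have hderiv : ∀ t ∈ Ioo (0:ℝ) 1,
      HasDerivWithinAt (fun t : ℝ => t / (1 - t)) (((1 - t) ^ 2)⁻¹) (Ioo 0 1) t := by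
    intro t ht
    have h1 : (1 : ℝ) - t ≠ 0 := by nlinarith [ht.2]
    have hd' : HasDerivAt (fun x : ℝ => 1 - x) (-1) t := by
      simpa using (hasDerivAt_id t).const_sub 1
    have hd : HasDerivAt (fun t : ℝ => t / (1 - t))
        ((1 * (1 - t) - t * (-1)) / (1 - t) ^ 2) t :=
      (hasDerivAt_id t).div hd' h1
    have : (1 * (1 - t) - t * (-1)) / (1 - t) ^ 2 = ((1 - t) ^ 2)⁻¹ := by ring
    exact (this ▸ hd).hasDerivWithinAt
  have hinj : InjOn (fun t : ℝ => t / (1 - t)) (Ioo 0 1) := by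
    intro x hx y hy hxy
    simp only at hxy
    have h1 : (1 : ℝ) - x ≠ 0 := by nlinarith [hx.2]
    have h2 : (1 : ℝ) - y ≠ 0 := by nlinarith [hy.2]
    field_simp at hxy
    nlinarith [hxy]
  have himg : (fun t : ℝ => t / (1 - t)) '' Ioo 0 1 = Ioi 0 := by
    ext x
    constructor
    · rintro ⟨t, ht, rfl⟩
      exact div_pos ht.1 (by nlinarith [ht.2])
    · intro hx
      refine ⟨x / (1 + x), ⟨div_pos hx (by linarith [mem_Ioi.mp hx]), ?_⟩, ?_⟩
      · rw [div_lt_one (by linarith [mem_Ioi.mp hx])]; linarith [mem_Ioi.mp hx]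
      · have h1 : (1 : ℝ) + x ≠ 0 := by have := mem_Ioi.mp hx; positivity
        field_simp
        ring
  have key := integral_image_eq_integral_abs_deriv_smul measurableSet_Ioo hderiv hinj g
  rw [himg] at key
  rw [key]
  have : ∀ t ∈ Ioo (0:ℝ) 1,
      |((1 - t) ^ 2)⁻¹| • g (t / (1 - t)) = t ^ (a - 1) * (1 - t) ^ (b - 1) := by
    intro t ht
    have h0 : (0:ℝ) < t := ht.1
    have h1 : (0:ℝ) < 1 - t := by nlinarith [ht.2]
    have e1 : t / (1 - t) = t * (1 - t)⁻¹ := div_eq_mul_inv _ _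
    have e2 : (1 : ℝ) + t / (1 - t) = (1 - t)⁻¹ := by field_simp; ring
    have e3 : |((1 - t) ^ 2)⁻¹| = (1 - t) ^ (-2 : ℝ) := by
      rw [abs_of_pos (by positivity), ← Real.rpow_natCast (1 - t) 2,
        ← Real.rpow_neg h1.le]
      norm_num
    rw [hg]
    simp only [smul_eq_mul, e2, e3]
    rw [e1, Real.mul_rpow h0.le (by positivity),
      Real.inv_rpow h1.le, Real.inv_rpow h1.le, ← Real.rpow_neg h1.le, ← Real.rpow_neg h1.le,
      show b - 1 = -2 + (-(a - 1) + (-(-(a + b)))) by ring,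
      Real.rpow_add h1, Real.rpow_add h1]
    ring
  rw [setIntegral_congr_fun measurableSet_Ioo this, ← integral_Ioc_eq_integral_Ioo,
    ← intervalIntegral.integral_of_le zero_le_one, hbeta]
-- bounds on v x = 1 - (x/(1+x))^m
lemma shot_noise_v_nonneg {m : ℝ} (hm : 1 ≤ m) {x : ℝ} (hx : 0 ≤ x) :
    0 ≤ 1 - (x / (1 + x)) ^ m := by
  have h1 : (0:ℝ) < 1 + x := by linarith
  have h2 : x / (1 + x) ≤ 1 := by rw [div_le_one h1]; linarith
  have := Real.rpow_le_one (by positivity) h2 (by linarith : (0:ℝ) ≤ m)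
  linarith

lemma v_le_one {m : ℝ} (hm : 1 ≤ m) {x : ℝ} (hx : 0 ≤ x) :
    1 - (x / (1 + x)) ^ m ≤ 1 := by
  have h1 : (0:ℝ) < 1 + x := by linarith
  have := Real.rpow_nonneg (show (0:ℝ) ≤ x / (1 + x) by positivity) m
  linarith

lemma v_le {m : ℝ} (hm : 1 ≤ m) {x : ℝ} (hx : 0 ≤ x) :
    1 - (x / (1 + x)) ^ m ≤ m * (1 + x)⁻¹ := by
  have h1 : (0:ℝ) < 1 + x := by linarith
  have hs : (-1 : ℝ) ≤ -(1 + x)⁻¹ := by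
    rw [neg_le_neg_iff]
    exact inv_le_one_of_one_le₀ (by linarith)
  have hb := one_add_mul_self_le_rpow_one_add hs hm
  have he : 1 + -(1 + x)⁻¹ = x / (1 + x) := by field_simp; ring
  rw [he] at hb
  nlinarith [hb]

lemma cont_v {m : ℝ} (hm : 1 ≤ m) : ContinuousOn (fun x : ℝ => 1 - (x / (1 + x)) ^ m) (Ici 0) := by
  refine continuousOn_const.sub (ContinuousOn.rpow_const ?_ ?_)
  · exact continuousOn_id.div (continuousOn_const.add continuousOn_id)
      (fun x hx => by simp only [mem_Ici] at hx; positivity)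
  · intro x hx
    simp only [mem_Ici] at hx
    rcases eq_or_lt_of_le hx with rfl | h
    · right; linarith
    · left; positivity

lemma integ_split {f : ℝ → ℝ} (h1 : IntegrableOn f (Ioc 0 1))
    (h2 : IntegrableOn f (Ioi 1)) : IntegrableOn f (Ioi (0:ℝ)) := by
  rw [← Ioc_union_Ioi_eq_Ioi (zero_le_one : (0:ℝ) ≤ 1)]
  exact h1.union h2

lemma integrable_beta_Ioi {a b : ℝ} (ha : 0 < a) (hb : 0 < b) :
    IntegrableOn (fun x : ℝ => x ^ (a - 1) * (1 + x) ^ (-(a + b))) (Ioi 0) := by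
  have hcont : ContinuousOn (fun x : ℝ => x ^ (a - 1) * (1 + x) ^ (-(a + b))) (Ioi 0) := by
    refine (ContinuousOn.rpow_const continuousOn_id fun x hx => Or.inl (ne_of_gt hx)).mul
      (ContinuousOn.rpow_const (continuousOn_const.add continuousOn_id)
        fun x hx => Or.inl (by have : (0:ℝ) < x := hx; positivity))
  refine integ_split ?_ ?_
  · refine Integrable.mono
      (g := fun x : ℝ => x ^ (a - 1))
      ((intervalIntegrable_iff_integrableOn_Ioc_of_le zero_le_one).mp
        (intervalIntegral.intervalIntegrable_rpow' (by linarith)))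
      ((hcont.mono Ioc_subset_Ioi_self).aestronglyMeasurable measurableSet_Ioc) ?_
    filter_upwards [ae_restrict_mem measurableSet_Ioc] with x hx
    have hx0 : (0:ℝ) < x := hx.1
    rw [Real.norm_eq_abs, Real.norm_eq_abs, abs_of_nonneg (by positivity),
      abs_of_nonneg (by positivity)]
    calc x ^ (a - 1) * (1 + x) ^ (-(a + b)) ≤ x ^ (a - 1) * 1 := by
          gcongr
          exact Real.rpow_le_one_of_one_le_of_nonpos (by linarith) (by linarith)
      _ = x ^ (a - 1) := mul_one _
  · refine Integrable.mono
      (g := fun x : ℝ => x ^ (-b - 1))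
      (integrableOn_Ioi_rpow_of_lt (by linarith) one_pos)
      ((hcont.mono (Ioi_subset_Ioi zero_le_one)).aestronglyMeasurable measurableSet_Ioi) ?_
    filter_upwards [ae_restrict_mem measurableSet_Ioi] with x hx
    have hx1 : (1:ℝ) < x := hx
    have hx0 : (0:ℝ) < x := by linarith
    rw [Real.norm_eq_abs, Real.norm_eq_abs, abs_of_nonneg (by positivity),
      abs_of_nonneg (by positivity)]
    calc x ^ (a - 1) * (1 + x) ^ (-(a + b))
        ≤ x ^ (a - 1) * x ^ (-(a + b)) :=
          mul_le_mul_of_nonneg_left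
            (Real.rpow_le_rpow_of_nonpos hx0 (by linarith) (by linarith)) (by positivity)
      _ = x ^ (-b - 1) := by rw [← Real.rpow_add hx0]; ring_nf

lemma integrable_uv {c m : ℝ} (hc : 0 < c) (hc1 : c < 1) (hm : 1 ≤ m) :
    IntegrableOn (fun x : ℝ => x ^ (c - 1) * (1 - (x / (1 + x)) ^ m)) (Ioi 0) := by
  have hcont : ContinuousOn (fun x : ℝ => x ^ (c - 1) * (1 - (x / (1 + x)) ^ m)) (Ioi 0) :=
    (ContinuousOn.rpow_const continuousOn_id fun x hx => Or.inl (ne_of_gt hx)).mul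
      ((cont_v hm).mono Ioi_subset_Ici_self)
  refine integ_split ?_ ?_
  · refine Integrable.mono
      (g := fun x : ℝ => x ^ (c - 1))
      ((intervalIntegrable_iff_integrableOn_Ioc_of_le zero_le_one).mp
        (intervalIntegral.intervalIntegrable_rpow' (by linarith)))
      ((hcont.mono Ioc_subset_Ioi_self).aestronglyMeasurable measurableSet_Ioc) ?_
    filter_upwards [ae_restrict_mem measurableSet_Ioc] with x hx
    have hx0 : (0:ℝ) < x := hx.1
    rw [Real.norm_eq_abs, Real.norm_eq_abs,
      abs_of_nonneg (mul_nonneg (by positivity) (shot_noise_v_nonneg hm hx0.le)),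
      abs_of_nonneg (by positivity)]
    calc x ^ (c - 1) * (1 - (x / (1 + x)) ^ m) ≤ x ^ (c - 1) * 1 := by
          have h1 := v_le_one hm hx0.le
          have h2 : (0:ℝ) ≤ x ^ (c - 1) := by positivity
          nlinarith
      _ = x ^ (c - 1) := mul_one _
  · refine Integrable.mono
      (g := fun x : ℝ => m * x ^ (c - 2))
      ((integrableOn_Ioi_rpow_of_lt (by linarith) one_pos).const_mul m)
      ((hcont.mono (Ioi_subset_Ioi zero_le_one)).aestronglyMeasurable measurableSet_Ioi) ?_
    filter_upwards [ae_restrict_mem measurableSet_Ioi] with x hx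
    have hx1 : (1:ℝ) < x := hx
    have hx0 : (0:ℝ) < x := by linarith
    have hm0 : (0:ℝ) < m := by linarith
    rw [Real.norm_eq_abs, Real.norm_eq_abs,
      abs_of_nonneg (mul_nonneg (by positivity) (shot_noise_v_nonneg hm hx0.le)),
      abs_of_nonneg (by positivity)]
    calc x ^ (c - 1) * (1 - (x / (1 + x)) ^ m)
        ≤ x ^ (c - 1) * (m * (1 + x)⁻¹) := by
          have h := v_le hm hx0.le
          have hp : (0:ℝ) ≤ x ^ (c - 1) := by positivity
          nlinarith
      _ ≤ x ^ (c - 1) * (m * x⁻¹) := by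
          gcongr
          linarith
      _ = m * x ^ (c - 2) := by
          rw [show (c:ℝ) - 2 = (c - 1) + (-1) by ring, Real.rpow_add hx0, Real.rpow_neg_one]
          ring
lemma shot_noise_J_eq {c m : ℝ} (hc : 0 < c) (hc1 : c < 1) (hm : 1 ≤ m)
    (hint_uv : IntegrableOn (fun x : ℝ => x ^ (c - 1) * (1 - (x / (1 + x)) ^ m)) (Ioi 0))
    (hint_beta : IntegrableOn
      (fun x : ℝ => x ^ ((m + c) - 1) * (1 + x) ^ (-((m + c) + (1 - c)))) (Ioi 0)) :
    ∫ x in Ioi (0:ℝ), x ^ (c - 1) * (1 - (x / (1 + x)) ^ m)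
      = (m / c) * ∫ x in Ioi (0:ℝ), x ^ ((m + c) - 1) * (1 + x) ^ (-((m + c) + (1 - c))) := by
  have hc0 : c ≠ 0 := hc.ne'
  have hm0 : (0:ℝ) < m := by linarith
  set u : ℝ → ℝ := fun x => x ^ c / c with hu_def
  set v : ℝ → ℝ := fun x => 1 - (x / (1 + x)) ^ m with hv_def
  set u' : ℝ → ℝ := fun x => x ^ (c - 1) with hu'_def
  set v' : ℝ → ℝ := fun x => -(m * (x ^ (m - 1) * (1 + x) ^ (-(m + 1)))) with hv'_def
  have hx1 : ∀ x : ℝ, x ∈ Ioi (0:ℝ) → (0:ℝ) < 1 + x := fun x hx => by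
    have : (0:ℝ) < x := hx; linarith
  have hu : ∀ x ∈ Ioi (0:ℝ), HasDerivAt u (u' x) x := by
    intro x hx
    have h := (Real.hasDerivAt_rpow_const (p := c) (Or.inl (ne_of_gt hx))).div_const c
    simpa [hu_def, hu'_def, mul_div_cancel_left₀ _ hc0] using h
  have hv : ∀ x ∈ Ioi (0:ℝ), HasDerivAt v (v' x) x := by
    intro x hx
    have hx0 : (0:ℝ) < x := hx
    have h1x : (0:ℝ) < 1 + x := by linarith
    have hg : HasDerivAt (fun x : ℝ => x / (1 + x))
        ((1 * (1 + x) - x * 1) / (1 + x) ^ 2) x := by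
      refine (hasDerivAt_id x).div ?_ (ne_of_gt h1x)
      simpa using (hasDerivAt_id x).const_add 1
    have hg' : HasDerivAt (fun x : ℝ => x / (1 + x)) (((1 + x) ^ 2)⁻¹) x := by
      convert hg using 1; field_simp; ring
    have h2 : HasDerivAt (fun x : ℝ => (x / (1 + x)) ^ m)
        (((1 + x) ^ 2)⁻¹ * m * (x / (1 + x)) ^ (m - 1)) x :=
      hg'.rpow_const (Or.inl (by positivity))
    have h3 : ((1 + x) ^ 2)⁻¹ * m * (x / (1 + x)) ^ (m - 1)
        = m * (x ^ (m - 1) * (1 + x) ^ (-(m + 1))) := by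
      rw [Real.div_rpow hx0.le h1x.le, show -(m+1) = -(m-1) + (-2) by ring,
        Real.rpow_add h1x, Real.rpow_neg h1x.le (m-1),
        show ((2:ℝ)) = ((2:ℕ):ℝ) by norm_num, Real.rpow_neg h1x.le,
        Real.rpow_natCast]
      field_simp
    have h4 := (h2.const_sub 1)
    rw [h3] at h4
    simpa [hv_def, hv'_def] using h4
  have huv' : IntegrableOn (u * v') (Ioi (0:ℝ)) := by
    refine IntegrableOn.congr_fun (hint_beta.const_mul (-(m / c))) ?_ measurableSet_Ioi
    intro x hx
    have hx0 : (0:ℝ) < x := hx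
    simp only [hu_def, hv'_def, Pi.mul_apply]
    rw [show (m + c) - 1 = c + (m - 1) by ring, Real.rpow_add hx0,
      show -((m + c) + (1 - c)) = -(m+1) by ring]
    ring
  have hu'v : IntegrableOn (u' * v) (Ioi (0:ℝ)) := by
    refine hint_uv.congr_fun (fun x hx => rfl) measurableSet_Ioi
  have h_zero : Tendsto (u * v) (nhdsWithin 0 (Ioi 0)) (nhds 0) := by
    have t1 : Tendsto u (nhdsWithin 0 (Ioi 0)) (nhds 0) := by
      have : ContinuousAt (fun x : ℝ => x ^ c) 0 :=
        Real.continuousAt_rpow_const 0 c (Or.inr hc.le)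
      have h0 : (0:ℝ) ^ c = 0 := Real.zero_rpow hc0
      have t0 : Tendsto (fun x : ℝ => x ^ c) (nhdsWithin 0 (Ioi 0)) (nhds ((0:ℝ) ^ c)) :=
        this.tendsto.mono_left nhdsWithin_le_nhds
      have := t0.div_const c
      simpa [hu_def, h0] using this
    have t2 : Tendsto v (nhdsWithin 0 (Ioi 0)) (nhds 1) := by
      have hcv : ContinuousOn v (Ici 0) := by
        refine continuousOn_const.sub (ContinuousOn.rpow_const ?_ ?_)
        · exact continuousOn_id.div (continuousOn_const.add continuousOn_id)
            (fun x hx => by have : (0:ℝ) ≤ x := hx; positivity)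
        · intro x hx
          rcases eq_or_lt_of_le (show (0:ℝ) ≤ x from hx) with rfl | h
          · right; linarith
          · left; positivity
      have := (hcv 0 self_mem_Ici).mono_left
        (nhdsWithin_mono 0 Ioi_subset_Ici_self)
      simpa [hv_def, Real.zero_rpow hm0.ne'] using this
    have := t1.mul t2
    simpa [Pi.mul_def] using this
  have h_infty : Tendsto (u * v) atTop (nhds 0) := by
    have hb : Tendsto (fun x : ℝ => (m / c) * x ^ (c - 1)) atTop (nhds 0) := by
      have := (tendsto_rpow_neg_atTop (by linarith : (0:ℝ) < 1 - c)).const_mul (m / c)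
      simpa [neg_sub] using this
    refine squeeze_zero' ?_ ?_ hb
    · filter_upwards [eventually_gt_atTop (0:ℝ)] with x hx
      have h1x : (0:ℝ) < 1 + x := by linarith
      have hv0 : 0 ≤ v x := by
        have h2 : x / (1 + x) ≤ 1 := by rw [div_le_one h1x]; linarith
        have := Real.rpow_le_one (by positivity) h2 hm0.le
        simp only [hv_def]; linarith
      have hu0 : 0 ≤ u x := by positivity
      exact mul_nonneg hu0 hv0
    · filter_upwards [eventually_gt_atTop (0:ℝ)] with x hx
      have h1x : (0:ℝ) < 1 + x := by linarith
      have hvle : v x ≤ m * (1 + x)⁻¹ := by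
        have hs : (-1 : ℝ) ≤ -(1 + x)⁻¹ := by
          rw [neg_le_neg_iff]
          exact inv_le_one_of_one_le₀ (by linarith)
        have hb2 := one_add_mul_self_le_rpow_one_add hs hm
        have he : 1 + -(1 + x)⁻¹ = x / (1 + x) := by field_simp; ring
        rw [he] at hb2
        simp only [hv_def]; nlinarith
      have hv0 : 0 ≤ v x := by
        have h2 : x / (1 + x) ≤ 1 := by rw [div_le_one h1x]; linarith
        have := Real.rpow_le_one (by positivity) h2 hm0.le
        simp only [hv_def]; linarith
      calc u x * v x ≤ u x * (m * x⁻¹) := by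
            have hu0 : 0 ≤ u x := by positivity
            have h5 : m * (1 + x)⁻¹ ≤ m * x⁻¹ := by gcongr; linarith
            exact mul_le_mul_of_nonneg_left (hvle.trans h5) hu0
        _ = (m / c) * x ^ (c - 1) := by
            simp only [hu_def]
            rw [show c - 1 = c + (-1) by ring, Real.rpow_add hx, Real.rpow_neg_one]
            ring
  have key := integral_Ioi_mul_deriv_eq_deriv_mul hu hv huv' hu'v h_zero h_infty
  -- key : ∫ x in Ioi 0, u x * v' x = 0 - 0 - ∫ x in Ioi 0, u' x * v x
  have e1 : ∫ x in Ioi (0:ℝ), u x * v' x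
      = -((m / c) * ∫ x in Ioi (0:ℝ), x ^ ((m + c) - 1) * (1 + x) ^ (-((m + c) + (1 - c)))) := by
    rw [← integral_const_mul, ← integral_neg]
    refine setIntegral_congr_fun measurableSet_Ioi fun x hx => ?_
    have hx0 : (0:ℝ) < x := hx
    simp only [hu_def, hv'_def]
    rw [show (m + c) - 1 = c + (m - 1) by ring, Real.rpow_add hx0,
      show -((m + c) + (1 - c)) = -(m+1) by ring]
    ring
  have e2 : (∫ x in Ioi (0:ℝ), x ^ (c - 1) * (1 - (x / (1 + x)) ^ m))
      = ∫ x in Ioi (0:ℝ), u' x * v x := rfl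
  rw [e2]
  rw [e1] at key
  linarith [key]

/-- Shot-noise integral: for α > 2, m ≥ 1, s > 0,
∫_{ℝ²} (1 - (‖y‖^α/(s+‖y‖^α))^m) dy = π s^{2/α} Γ(m+2/α) Γ(1-2/α) / Γ(m). -/
theorem shot_noise_integral (α m s : ℝ) (hα : 2 < α) (hm : 1 ≤ m) (hs : 0 < s) :
    (∫ y : EuclideanSpace ℝ (Fin 2),
        (1 - (‖y‖ ^ α / (s + ‖y‖ ^ α)) ^ m)) =
      Real.pi * s ^ (2 / α) * Real.Gamma (m + 2 / α) * Real.Gamma (1 - 2 / α) /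
        Real.Gamma m := by
  have hα0 : (0:ℝ) < α := by linarith
  have hm0 : (0:ℝ) < m := by linarith
  have hc : (0:ℝ) < 2 / α := by positivity
  have hc1 : 2 / α < 1 := by rw [div_lt_one hα0]; linarith
  -- Step 0: polar coordinates
  have hpolar : (∫ y : EuclideanSpace ℝ (Fin 2), (1 - (‖y‖ ^ α / (s + ‖y‖ ^ α)) ^ m))
      = 2 * π * ∫ r in Ioi (0:ℝ), r * (1 - (r ^ α / (s + r ^ α)) ^ m) := by
    have hpolar := integral_fun_norm_addHaar (volume : Measure (EuclideanSpace ℝ (Fin 2)))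
      (fun r : ℝ => 1 - (r ^ α / (s + r ^ α)) ^ m)
    have hdim : Module.finrank ℝ (EuclideanSpace ℝ (Fin 2)) = 2 := finrank_euclideanSpace_fin
    rw [hdim] at hpolar
    have hvol : (volume (Metric.ball (0 : EuclideanSpace ℝ (Fin 2)) 1)).toReal = π := by
      rw [EuclideanSpace.volume_ball]
      simp only [Fintype.card_fin]
      rw [ENNReal.ofReal_one, one_pow, one_mul,
        show ((2:ℕ):ℝ) / 2 + 1 = 2 by norm_num, Real.Gamma_two,
        Real.sq_sqrt Real.pi_nonneg]
      norm_num [ENNReal.toReal_ofReal Real.pi_nonneg]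
    rw [measureReal_def, hvol] at hpolar
    rw [hpolar]
    simp only [smul_eq_mul, nsmul_eq_mul, show (2:ℕ) - 1 = 1 from rfl, pow_one, Nat.cast_ofNat]
    ring
  -- Step A: substitution r = y^(1/α)
  have hA : ∫ r in Ioi (0:ℝ), r * (1 - (r ^ α / (s + r ^ α)) ^ m)
      = (1 / α) * ∫ y in Ioi (0:ℝ), y ^ (2 / α - 1) * (1 - (y / (s + y)) ^ m) := by
    have key := integral_comp_rpow_Ioi_of_pos
      (g := fun y : ℝ => y ^ (2 / α - 1) * (1 - (y / (s + y)) ^ m)) hα0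
    rw [← key, ← integral_const_mul]
    refine setIntegral_congr_fun measurableSet_Ioi fun x hx => ?_
    have hx0 : (0:ℝ) < x := hx
    have e1 : (x ^ α) ^ (2 / α - 1) = x ^ (2 - α) := by
      rw [← Real.rpow_mul hx0.le]
      congr 1
      field_simp
    have e2 : x ^ (α - 1) * x ^ (2 - α) = x := by
      rw [← Real.rpow_add hx0, show α - 1 + (2 - α) = 1 by ring, Real.rpow_one]
    rw [smul_eq_mul, e1,
      show 1 / α * (α * x ^ (α - 1) * (x ^ (2 - α) * (1 - (x ^ α / (s + x ^ α)) ^ m)))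
        = (α⁻¹ * α) * (x ^ (α - 1) * (x ^ (2 - α) * (1 - (x ^ α / (s + x ^ α)) ^ m))) by ring,
      inv_mul_cancel₀ hα0.ne', one_mul]
    linear_combination (-(1 - (x ^ α / (s + x ^ α)) ^ m)) * e2
  -- Step B: scaling y = s u
  have hB : ∫ y in Ioi (0:ℝ), y ^ (2 / α - 1) * (1 - (y / (s + y)) ^ m)
      = s ^ (2 / α) * ∫ u in Ioi (0:ℝ), u ^ (2 / α - 1) * (1 - (u / (1 + u)) ^ m) := by
    have key := integral_comp_mul_left_Ioi
      (g := fun y : ℝ => y ^ (2 / α - 1) * (1 - (y / (s + y)) ^ m)) 0 hs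
    rw [mul_zero] at key
    have congr1 : ∫ u in Ioi (0:ℝ),
        (fun y : ℝ => y ^ (2 / α - 1) * (1 - (y / (s + y)) ^ m)) (s * u)
        = ∫ u in Ioi (0:ℝ), s ^ (2 / α - 1) * (u ^ (2 / α - 1) * (1 - (u / (1 + u)) ^ m)) := by
      refine setIntegral_congr_fun measurableSet_Ioi fun u hu => ?_
      have hu0 : (0:ℝ) < u := hu
      simp only
      rw [Real.mul_rpow hs.le hu0.le,
        show s * u / (s + s * u) = u / (1 + u) by rw [show s + s * u = s * (1 + u) by ring,
          mul_div_mul_left _ _ (ne_of_gt hs)]]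
      ring
    rw [congr1, integral_const_mul] at key
    rw [smul_eq_mul] at key
    have h6 : ∫ y in Ioi (0:ℝ), y ^ (2 / α - 1) * (1 - (y / (s + y)) ^ m)
        = s * (s ^ (2 / α - 1) * ∫ u in Ioi (0:ℝ), u ^ (2 / α - 1) * (1 - (u / (1 + u)) ^ m)) := by
      rw [key, ← mul_assoc, mul_inv_cancel₀ (ne_of_gt hs), one_mul]
    have hpow : s * s ^ (2 / α - 1) = s ^ (2 / α) := by
      have h2 := (Real.rpow_add hs 1 (2 / α - 1)).symm
      rw [Real.rpow_one] at h2
      rw [h2]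
      norm_num
    rw [h6, ← mul_assoc, hpow]
  -- Step C: integration by parts
  have hC := shot_noise_J_eq hc hc1 hm (integrable_uv hc hc1 hm)
    (integrable_beta_Ioi (by linarith : (0:ℝ) < m + 2 / α) (by linarith : (0:ℝ) < 1 - 2 / α))
  -- Step D: Beta integral
  have hD := shot_noise_beta_Ioi (by linarith : (0:ℝ) < m + 2 / α)
    (by linarith : (0:ℝ) < 1 - 2 / α)
    (shot_noise_real_beta (by linarith) (by linarith))
  rw [hpolar, hA, hB, hC, hD, show (m + 2 / α) + (1 - 2 / α) = m + 1 by ring,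
    Real.Gamma_add_one hm0.ne']
  have hΓ : Real.Gamma m ≠ 0 := (Real.Gamma_pos_of_pos hm0).ne'
  field_simp
end

section
/- Let α > 2, K ≥ 1, N_s ≥ 1 integers, s > 0, λ_p > 0. Then the inter-cluster Laplace transform L(s) = exp(-λ_p ∫_{ℝ²} [1 - ((1/(πR²)) ∫_{B(o,R)} (‖x-y‖^α/(s+‖x-y‖^α))^{N_s} dx)^K] dy) satisfies L(s) ≤ exp(-λ_p s^{2/α} Γ(K N_s + 2/α) Γ(1 - 2/α) / Γ(K N_s)). -/
open MeasureTheory Real Set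

private lemma cpow_helper (a b t : ℝ) (h0 : 0 < t) (h1 : t < 1) :
    (t : ℂ) ^ ((a : ℂ) - 1) * ((1 : ℂ) - (t : ℂ)) ^ ((b : ℂ) - 1)
      = ((t ^ (a - 1) * (1 - t) ^ (b - 1) : ℝ) : ℂ) := by
  have h1t : (0:ℝ) ≤ 1 - t := by linarith
  rw [Complex.ofReal_mul]
  rw [show ((1:ℂ) - (t:ℂ)) = ((1 - t : ℝ) : ℂ) by push_cast; ring]
  rw [show ((a : ℂ) - 1) = ((a - 1 : ℝ) : ℂ) by push_cast; ring]
  rw [show ((b : ℂ) - 1) = ((b - 1 : ℝ) : ℂ) by push_cast; ring]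
  rw [Complex.ofReal_cpow h0.le, Complex.ofReal_cpow h1t]

private lemma ae_ne_one : ∀ᵐ t : ℝ, t ≠ (1:ℝ) := by
  have : volume ({(1:ℝ)} : Set ℝ) = 0 := volume_singleton
  filter_upwards [compl_mem_ae_iff.2 this] with t ht
  simpa using ht

private lemma realBeta (a b : ℝ) (ha : 0 < a) (hb : 0 < b) :
    ∫ t in (0:ℝ)..1, t ^ (a - 1) * (1 - t) ^ (b - 1)
      = Real.Gamma a * Real.Gamma b / Real.Gamma (a + b) := by
  have hBC := Complex.Gamma_mul_Gamma_eq_betaIntegral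
    (s := (a:ℂ)) (t := (b:ℂ)) (by simpa using ha) (by simpa using hb)
  have hbeta : Complex.betaIntegral (a:ℂ) (b:ℂ)
      = ((∫ t in (0:ℝ)..1, t ^ (a - 1) * (1 - t) ^ (b - 1) : ℝ) : ℂ) := by
    rw [Complex.betaIntegral, ← intervalIntegral.integral_ofReal]
    refine intervalIntegral.integral_congr_ae ?_
    filter_upwards [ae_ne_one] with t ht htmem
    rw [Set.uIoc_of_le (by norm_num : (0:ℝ) ≤ 1)] at htmem
    exact cpow_helper a b t htmem.1 (lt_of_le_of_ne htmem.2 ht)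
  rw [hbeta] at hBC
  have hG : Real.Gamma a * Real.Gamma b
      = Real.Gamma (a + b) * ∫ t in (0:ℝ)..1, t ^ (a - 1) * (1 - t) ^ (b - 1) := by
    have := hBC
    rw [Complex.Gamma_ofReal, Complex.Gamma_ofReal,
      show ((a:ℂ) + (b:ℂ)) = ((a + b : ℝ) : ℂ) by push_cast; ring, Complex.Gamma_ofReal] at this
    exact_mod_cast this
  have hGab : Real.Gamma (a + b) ≠ 0 := (Real.Gamma_pos_of_pos (by linarith)).ne'
  field_simp [hG]
  rw [hG]; ring

private lemma realBeta_integrableOn (a b : ℝ) (ha : 0 < a) (hb : 0 < b) :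
    IntegrableOn (fun t : ℝ => t ^ (a - 1) * (1 - t) ^ (b - 1)) (Set.Ioo 0 1) := by
  have h := Complex.betaIntegral_convergent (u := (a:ℂ)) (v := (b:ℂ))
    (by simpa using ha) (by simpa using hb)
  rw [intervalIntegrable_iff, Set.uIoc_of_le (by norm_num : (0:ℝ) ≤ 1)] at h
  have h2 : IntegrableOn (fun t : ℝ => ‖(t:ℂ) ^ ((a:ℂ) - 1) * ((1:ℂ) - (t:ℂ)) ^ ((b:ℂ) - 1)‖)
      (Set.Ioo 0 1) := (h.mono_set Set.Ioo_subset_Ioc_self).norm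
  refine h2.congr_fun (fun t ht => ?_) measurableSet_Ioo
  dsimp only
  rw [cpow_helper a b t ht.1 ht.2, Complex.norm_real, Real.norm_eq_abs,
    abs_of_nonneg (mul_nonneg (Real.rpow_nonneg ht.1.le _)
      (Real.rpow_nonneg (by linarith [ht.2] : (0:ℝ) ≤ 1 - t) _))]

private lemma beta_Ioi (a b : ℝ) (ha : 0 < a) (hb : 0 < b) :
    IntegrableOn (fun u : ℝ => u ^ (a - 1) * (1 + u) ^ (-(a + b))) (Set.Ioi 0) ∧
    ∫ u in Set.Ioi (0:ℝ), u ^ (a - 1) * (1 + u) ^ (-(a + b))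
      = Real.Gamma a * Real.Gamma b / Real.Gamma (a + b) := by
  set f : ℝ → ℝ := fun t => t / (1 - t) with hf
  have hderiv : ∀ t ∈ Set.Ioo (0:ℝ) 1,
      HasDerivWithinAt f (((1 - t) ^ 2)⁻¹) (Set.Ioo 0 1) t := by
    intro t ht
    have hne : (1:ℝ) - t ≠ 0 := by have := ht.2; intro h; linarith [h]
    have := (hasDerivAt_id t).div ((hasDerivAt_const t (1:ℝ)).sub (hasDerivAt_id t)) hne
    convert this.hasDerivWithinAt using 1
    · rfl
    · rfl
    · rfl
    · simp only [Pi.sub_apply, id]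
      field_simp
      ring
  have hinj : Set.InjOn f (Set.Ioo 0 1) := by
    intro x hx y hy hxy
    have hx1 : (1:ℝ) - x ≠ 0 := by have := hx.2; intro h; linarith [h]
    have hy1 : (1:ℝ) - y ≠ 0 := by have := hy.2; intro h; linarith [h]
    simp only [hf] at hxy
    field_simp at hxy
    nlinarith [hxy]
  have himg : f '' Set.Ioo 0 1 = Set.Ioi (0:ℝ) := by
    ext u
    constructor
    · rintro ⟨t, ht, rfl⟩
      exact div_pos ht.1 (by linarith [ht.2])
    · intro hu
      refine ⟨u / (1 + u), ⟨div_pos hu (by linarith [Set.mem_Ioi.mp hu]), ?_⟩, ?_⟩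
      · rw [div_lt_one (by linarith [Set.mem_Ioi.mp hu])]
        linarith [Set.mem_Ioi.mp hu]
      · have h1u : (1:ℝ) + u ≠ 0 := by have := Set.mem_Ioi.mp hu; intro h; linarith [h]
        simp only [hf]
        field_simp
        ring
  have hcongr : ∀ t ∈ Set.Ioo (0:ℝ) 1,
      |((1 - t) ^ 2)⁻¹| • ((f t) ^ (a - 1) * (1 + f t) ^ (-(a + b)))
        = t ^ (a - 1) * (1 - t) ^ (b - 1) := by
    intro t ht
    have ht0 := ht.1
    have hc : (0:ℝ) < 1 - t := by linarith [ht.2]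
    have e1 : 1 + f t = (1 - t)⁻¹ := by simp only [hf]; field_simp; ring
    have e2 : f t = t * (1 - t)⁻¹ := by rw [hf]; ring
    have h2 : (((1 - t) ^ 2)⁻¹ : ℝ) = (1 - t) ^ (-2 : ℝ) := by
      rw [show (-2:ℝ) = -((2:ℕ):ℝ) by norm_num, Real.rpow_neg hc.le, Real.rpow_natCast]
    have h3 : (t * (1 - t)⁻¹) ^ (a - 1) = t ^ (a - 1) * (1 - t) ^ (-(a - 1)) := by
      rw [Real.mul_rpow ht0.le (by positivity), Real.inv_rpow hc.le, ← Real.rpow_neg hc.le]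
    have h4 : ((1 - t)⁻¹) ^ (-(a + b)) = (1 - t) ^ (a + b) := by
      rw [Real.inv_rpow hc.le, ← Real.rpow_neg hc.le, neg_neg]
    have hE : (1 - t) ^ (-2 : ℝ) * ((1 - t) ^ (-(a - 1)) * (1 - t) ^ (a + b))
        = (1 - t) ^ (b - 1) := by
      rw [← Real.rpow_add hc, ← Real.rpow_add hc]
      congr 1
      ring
    rw [smul_eq_mul, e1, e2, abs_of_pos (by positivity), h2, h3, h4]
    linear_combination t ^ (a - 1) * hE
  constructor
  · have := (integrableOn_image_iff_integrableOn_abs_deriv_smul measurableSet_Ioo hderiv hinj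
      (fun u : ℝ => u ^ (a - 1) * (1 + u) ^ (-(a + b))))
    rw [himg] at this
    rw [this]
    exact (realBeta_integrableOn a b ha hb).congr_fun (fun t ht => (hcongr t ht).symm)
      measurableSet_Ioo
  · rw [← himg, integral_image_eq_integral_abs_deriv_smul measurableSet_Ioo hderiv hinj,
      setIntegral_congr_fun measurableSet_Ioo hcongr, ← realBeta a b ha hb,
      intervalIntegral.integral_of_le (by norm_num : (0:ℝ) ≤ 1)]
    exact MeasureTheory.integral_Ioc_eq_integral_Ioo.symm

private lemma geom_decomp (m : ℕ) (u : ℝ) (hu : 0 < u) :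
    1 - (u / (1 + u)) ^ m = ∑ j ∈ Finset.range m, u ^ j / (1 + u) ^ (j + 1) := by
  induction m with
  | zero => simp
  | succ n ih =>
    rw [Finset.sum_range_succ, ← ih]
    have h1u : (0:ℝ) < 1 + u := by linarith
    rw [div_pow, div_pow]
    field_simp
    ring

private lemma gamma_sum (p : ℝ) (hp : 0 < p) :
    ∀ m : ℕ, 1 ≤ m →
      ∑ j ∈ Finset.range m, Real.Gamma (p + j) / (Nat.factorial j : ℝ)
        = Real.Gamma (m + p) / (p * Real.Gamma m) := by
  intro m
  induction m with
  | zero => intro h; omega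
  | succ n ih =>
    intro _
    rcases Nat.eq_zero_or_pos n with hn | hn
    · subst hn
      simp [Real.Gamma_one]
      rw [show (1:ℝ) + p = p + 1 by ring, Real.Gamma_add_one hp.ne']
      field_simp
    · rw [Finset.sum_range_succ, ih hn]
      have hΓn : Real.Gamma (n : ℝ) ≠ 0 :=
        (Real.Gamma_pos_of_pos (by exact_mod_cast hn : (0:ℝ) < n)).ne'
      have hfac : (Nat.factorial n : ℝ) = (n : ℝ) * Real.Gamma (n : ℝ) := by
        rw [← Real.Gamma_nat_eq_factorial n, show ((n:ℝ) + 1) = (n:ℝ) + 1 from rfl,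
          Real.Gamma_add_one (by exact_mod_cast hn.ne' : (n:ℝ) ≠ 0)]
      have hΓnp : Real.Gamma ((n:ℝ) + 1 + p) = ((n:ℝ) + p) * Real.Gamma ((n:ℝ) + p) := by
        rw [show (n:ℝ) + 1 + p = ((n:ℝ) + p) + 1 by ring,
          Real.Gamma_add_one (by positivity : ((n:ℝ) + p) ≠ 0)]
      have hΓn1 : Real.Gamma (((n+1 : ℕ)):ℝ) = (n:ℝ) * Real.Gamma (n : ℝ) := by
        push_cast
        rw [Real.Gamma_add_one (by exact_mod_cast hn.ne' : (n:ℝ) ≠ 0)]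
      rw [show (((n+1:ℕ)):ℝ) + p = (n:ℝ) + 1 + p by push_cast; ring, hΓnp, hΓn1, hfac,
        show Real.Gamma (p + (n:ℝ)) = Real.Gamma ((n:ℝ) + p) by rw [add_comm]]
      have hn0 : ((n:ℝ)) ≠ 0 := by exact_mod_cast hn.ne'
      field_simp

private lemma term_integral (p : ℝ) (hp0 : 0 < p) (hp1 : p < 1) (j : ℕ) :
    IntegrableOn (fun u : ℝ => u ^ (p - 1) * (u ^ j / (1 + u) ^ (j + 1))) (Set.Ioi 0) ∧
    ∫ u in Set.Ioi (0:ℝ), u ^ (p - 1) * (u ^ j / (1 + u) ^ (j + 1))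
      = Real.Gamma (p + j) * Real.Gamma (1 - p) / (Nat.factorial j : ℝ) := by
  have ha : 0 < p + (j:ℝ) := by positivity
  have hb : 0 < 1 - p := by linarith
  have hcongr : ∀ u ∈ Set.Ioi (0:ℝ),
      u ^ (p + (j:ℝ) - 1) * (1 + u) ^ (-(p + (j:ℝ) + (1 - p)))
        = u ^ (p - 1) * (u ^ j / (1 + u) ^ (j + 1)) := by
    intro u hu
    have hu0 : (0:ℝ) < u := hu
    have h1u : (0:ℝ) < 1 + u := by linarith
    have e1 : u ^ (p + (j:ℝ) - 1) = u ^ (p - 1) * u ^ j := by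
      rw [← Real.rpow_natCast u j, ← Real.rpow_add hu0]
      congr 1
      ring
    have e2 : (1 + u) ^ (-(p + (j:ℝ) + (1 - p))) = ((1 + u) ^ (j + 1))⁻¹ := by
      rw [show -(p + (j:ℝ) + (1 - p)) = -(((j+1:ℕ)):ℝ) by push_cast; ring,
        Real.rpow_neg h1u.le, Real.rpow_natCast]
    rw [e1, e2]
    ring
  have hB := beta_Ioi (p + (j:ℝ)) (1 - p) ha hb
  have hfac : Real.Gamma (p + (j:ℝ) + (1 - p)) = (Nat.factorial j : ℝ) := by
    rw [show p + (j:ℝ) + (1 - p) = (j:ℝ) + 1 by ring, Real.Gamma_nat_eq_factorial]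
  constructor
  · exact (hB.1.congr_fun (fun u hu => hcongr u hu) measurableSet_Ioi)
  · rw [← setIntegral_congr_fun measurableSet_Ioi hcongr, hB.2, hfac]

private lemma B_value (p : ℝ) (hp0 : 0 < p) (hp1 : p < 1) (m : ℕ) (hm : 1 ≤ m) :
    IntegrableOn (fun u : ℝ => u ^ (p - 1) * (1 - (u / (1 + u)) ^ m)) (Set.Ioi 0) ∧
    ∫ u in Set.Ioi (0:ℝ), u ^ (p - 1) * (1 - (u / (1 + u)) ^ m)
      = Real.Gamma ((m:ℝ) + p) * Real.Gamma (1 - p) / (p * Real.Gamma (m:ℝ)) := by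
  have hcongr : ∀ u ∈ Set.Ioi (0:ℝ),
      (∑ j ∈ Finset.range m, u ^ (p - 1) * (u ^ j / (1 + u) ^ (j + 1)))
        = u ^ (p - 1) * (1 - (u / (1 + u)) ^ m) := by
    intro u hu
    rw [← Finset.mul_sum, ← geom_decomp m u hu]
  have hint : IntegrableOn
      (fun u : ℝ => ∑ j ∈ Finset.range m, u ^ (p - 1) * (u ^ j / (1 + u) ^ (j + 1)))
      (Set.Ioi 0) := by
    apply integrable_finset_sum
    intro j _
    exact (term_integral p hp0 hp1 j).1
  constructor
  · exact hint.congr_fun hcongr measurableSet_Ioi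
  · rw [← setIntegral_congr_fun measurableSet_Ioi hcongr,
      integral_finset_sum _ (fun j _ => (term_integral p hp0 hp1 j).1)]
    have : ∑ j ∈ Finset.range m,
        (Real.Gamma (p + j) * Real.Gamma (1 - p) / (Nat.factorial j : ℝ))
        = Real.Gamma (1 - p) * ∑ j ∈ Finset.range m, Real.Gamma (p + j) / (Nat.factorial j : ℝ) := by
      rw [Finset.mul_sum]
      refine Finset.sum_congr rfl (fun j _ => by ring)
    rw [Finset.sum_congr rfl (fun j _ => (term_integral p hp0 hp1 j).2), this,
      gamma_sum p hp0 m hm]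
    ring


private lemma one_sub_pow_le' (n : ℕ) (a : ℝ) (h0 : 0 ≤ a) (h1 : a ≤ 1) :
    1 - a ^ n ≤ n * (1 - a) := by
  induction n with
  | zero => simp
  | succ k ih =>
    have hak : a ^ k ≤ 1 := pow_le_one₀ h0 h1
    have hak0 : 0 ≤ a ^ k := pow_nonneg h0 k
    push_cast
    calc 1 - a ^ (k + 1) = (1 - a) + a * (1 - a ^ k) := by ring
    _ ≤ (1 - a) + 1 * (k * (1 - a)) := by
        have := mul_le_mul_of_nonneg_left ih h0
        nlinarith
    _ = ((k : ℝ) + 1) * (1 - a) := by ring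

section planar

variable (α s : ℝ)

private lemma ratio_cont (hα : 2 < α) (hs : 0 < s) :
    Continuous (fun z : EuclideanSpace ℝ (Fin 2) => ‖z‖ ^ α / (s + ‖z‖ ^ α)) := by
  have hnum : Continuous fun z : EuclideanSpace ℝ (Fin 2) => ‖z‖ ^ α :=
    continuous_norm.rpow_const (fun z => Or.inr (by linarith))
  exact hnum.div (continuous_const.add hnum)
    (fun z => by positivity)

private lemma ratio_mem (hs : 0 < s) (z : EuclideanSpace ℝ (Fin 2)) :
    ‖z‖ ^ α / (s + ‖z‖ ^ α) ∈ Set.Icc (0:ℝ) 1 := by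
  have ht : (0:ℝ) ≤ ‖z‖ ^ α := Real.rpow_nonneg (norm_nonneg z) α
  constructor
  · positivity
  · rw [div_le_one (by positivity)]
    linarith

private lemma planar_integrable (hα : 2 < α) (hs : 0 < s) (m : ℕ) :
    Integrable (fun z : EuclideanSpace ℝ (Fin 2) =>
      1 - (‖z‖ ^ α / (s + ‖z‖ ^ α)) ^ m) := by
  set C : ℝ := m * s * 2 ^ α * max s⁻¹ 1 with hC
  have hmeas : AEStronglyMeasurable (fun z : EuclideanSpace ℝ (Fin 2) =>
      1 - (‖z‖ ^ α / (s + ‖z‖ ^ α)) ^ m) volume :=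
    (continuous_const.sub ((ratio_cont α s hα hs).pow m)).aestronglyMeasurable
  have hint : Integrable (fun z : EuclideanSpace ℝ (Fin 2) => C * (1 + ‖z‖) ^ (-α)) := by
    refine (integrable_one_add_norm ?_).const_mul C
    rw [finrank_euclideanSpace_fin]
    exact_mod_cast hα
  refine hint.mono' hmeas (Filter.Eventually.of_forall (fun z => ?_))
  have ht : (0:ℝ) ≤ ‖z‖ ^ α := Real.rpow_nonneg (norm_nonneg z) α
  set t := ‖z‖ ^ α with htt
  have hst : (0:ℝ) < s + t := by linarith
  obtain ⟨hr0, hr1⟩ := ratio_mem α s hs z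
  rw [← htt] at hr0 hr1
  have hrm : (t / (s + t)) ^ m ≤ 1 := pow_le_one₀ hr0 hr1
  have hrm0 : 0 ≤ (t / (s + t)) ^ m := pow_nonneg hr0 m
  rw [Real.norm_eq_abs, abs_of_nonneg (by linarith)]
  have h1 : 1 - (t / (s + t)) ^ m ≤ m * (s / (s + t)) := by
    have := one_sub_pow_le' m (t / (s + t)) hr0 hr1
    have he : 1 - t / (s + t) = s / (s + t) := by field_simp; ring
    rw [he] at this
    exact this
  have h2 : (1 + ‖z‖) ^ α ≤ 2 ^ α * max 1 t := by
    have hle : 1 + ‖z‖ ≤ 2 * max 1 ‖z‖ := by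
      have := le_max_left (1:ℝ) ‖z‖
      have := le_max_right (1:ℝ) ‖z‖
      linarith
    calc (1 + ‖z‖) ^ α ≤ (2 * max 1 ‖z‖) ^ α :=
          Real.rpow_le_rpow (by positivity) hle (by linarith)
    _ = 2 ^ α * (max 1 ‖z‖) ^ α :=
          Real.mul_rpow (by norm_num) (le_max_of_le_left zero_le_one)
    _ = 2 ^ α * max 1 t := by
        rcases le_total 1 ‖z‖ with h | h
        · rw [max_eq_right h, max_eq_right]
          calc (1:ℝ) = 1 ^ α := (Real.one_rpow α).symm
          _ ≤ ‖z‖ ^ α := Real.rpow_le_rpow zero_le_one h (by linarith)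
        · rw [max_eq_left h, Real.one_rpow, max_eq_left]
          calc ‖z‖ ^ α ≤ 1 ^ α := Real.rpow_le_rpow (norm_nonneg z) h (by linarith)
          _ = 1 := Real.one_rpow α
  have h3 : max 1 t ≤ max s⁻¹ 1 * (s + t) := by
    rcases le_total 1 t with h | h
    · rw [max_eq_right h]
      calc t ≤ s + t := by linarith
      _ ≤ max s⁻¹ 1 * (s + t) := le_mul_of_one_le_left hst.le (le_max_right _ _)
    · rw [max_eq_left h]
      calc (1:ℝ) = s⁻¹ * s := by field_simp
      _ ≤ max s⁻¹ 1 * (s + t) := by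
          apply mul_le_mul (le_max_left _ _) (by linarith) hs.le
          positivity
  have hpow : (0:ℝ) < (1 + ‖z‖) ^ α := Real.rpow_pos_of_pos (by positivity) α
  have hneg : (1 + ‖z‖) ^ (-α) = ((1 + ‖z‖) ^ α)⁻¹ := Real.rpow_neg (by positivity) α
  rw [hneg]
  have key : (m:ℝ) * s * (1 + ‖z‖) ^ α ≤ C * (s + t) := by
    calc (m:ℝ) * s * (1 + ‖z‖) ^ α ≤ (m:ℝ) * s * (2 ^ α * max 1 t) :=
          mul_le_mul_of_nonneg_left h2 (by positivity)
    _ ≤ (m:ℝ) * s * (2 ^ α * (max s⁻¹ 1 * (s + t))) :=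
          mul_le_mul_of_nonneg_left (mul_le_mul_of_nonneg_left h3 (by positivity))
            (by positivity)
    _ = C * (s + t) := by rw [hC]; ring
  calc 1 - (t / (s + t)) ^ m ≤ m * (s / (s + t)) := h1
  _ ≤ C * ((1 + ‖z‖) ^ α)⁻¹ := by
      rw [show (m:ℝ) * (s / (s + t)) = (m * s) / (s + t) by ring, ← div_eq_mul_inv,
        div_le_div_iff₀ hst hpow]
      exact key


private lemma vol_unit_ball :
    (volume (Metric.ball (0 : EuclideanSpace ℝ (Fin 2)) 1)).toReal = π := by
  rw [EuclideanSpace.volume_ball]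
  simp only [Fintype.card_fin]
  rw [ENNReal.ofReal_one, one_pow, one_mul]
  rw [show ((2:ℕ):ℝ) / 2 + 1 = 2 by norm_num, Real.Gamma_two]
  rw [ENNReal.toReal_ofReal (by positivity)]
  rw [div_one, sq_sqrt Real.pi_nonneg]

private lemma planar_value (α s : ℝ) (hα : 2 < α) (hs : 0 < s) (m : ℕ) (hm : 1 ≤ m) :
    ∫ z : EuclideanSpace ℝ (Fin 2), (1 - (‖z‖ ^ α / (s + ‖z‖ ^ α)) ^ m)
      = π * (s ^ (2/α) *
        (Real.Gamma ((m:ℝ) + 2/α) * Real.Gamma (1 - 2/α) / Real.Gamma (m:ℝ))) := by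
  have hα0 : (0:ℝ) < α := by linarith
  have hp0 : (0:ℝ) < 2/α := by positivity
  have hp1 : 2/α < 1 := by rw [div_lt_one hα0]; linarith
  have hpolar := integral_fun_norm_addHaar (volume : Measure (EuclideanSpace ℝ (Fin 2)))
    (fun r : ℝ => 1 - (r ^ α / (s + r ^ α)) ^ m)
  rw [finrank_euclideanSpace_fin, measureReal_def, vol_unit_ball] at hpolar
  simp only [show (2:ℕ) - 1 = 1 from rfl, pow_one, smul_eq_mul, nsmul_eq_mul, Nat.cast_ofNat] at hpolar
  rw [hpolar]
  -- now : 2 * (π * ∫ y in Ioi 0, y * (1 - (y^α/(s+y^α))^m)) = RHS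
  set J := ∫ y in Set.Ioi (0:ℝ), y * (1 - (y ^ α / (s + y ^ α)) ^ m) with hJ
  set T := ∫ x in Set.Ioi (0:ℝ), x * (1 - (x ^ α / (1 + x ^ α)) ^ m) with hT
  set b := s ^ (1/α) with hbdef
  have hb : 0 < b := Real.rpow_pos_of_pos hs _
  -- scaling step : J = b * b * T
  have hscale := integral_comp_mul_left_Ioi
    (fun r : ℝ => r * (1 - (r ^ α / (s + r ^ α)) ^ m)) 0 hb
  rw [mul_zero] at hscale
  have hcongr1 : ∀ x ∈ Set.Ioi (0:ℝ),
      (fun r : ℝ => r * (1 - (r ^ α / (s + r ^ α)) ^ m)) (b * x)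
        = b * (x * (1 - (x ^ α / (1 + x ^ α)) ^ m)) := by
    intro x hx
    have hx0 : (0:ℝ) < x := hx
    have hbx : (b * x) ^ α = s * x ^ α := by
      rw [Real.mul_rpow hb.le hx0.le, hbdef, ← Real.rpow_mul hs.le,
        one_div_mul_cancel hα0.ne', Real.rpow_one]
    show (b * x) * (1 - ((b * x) ^ α / (s + (b * x) ^ α)) ^ m)
      = b * (x * (1 - (x ^ α / (1 + x ^ α)) ^ m))
    rw [hbx, show s + s * x ^ α = s * (1 + x ^ α) by ring,
      mul_div_mul_left _ _ hs.ne']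
    ring
  rw [setIntegral_congr_fun measurableSet_Ioi hcongr1, integral_const_mul, ← hT,
    smul_eq_mul, ← hJ] at hscale
  have hJT : J = b * b * T := by
    have : b * (b * T) = b * (b⁻¹ * J) := by rw [hscale]
    rw [← mul_assoc, ← mul_assoc, mul_inv_cancel₀ hb.ne', one_mul] at this
    linarith [this]
  -- rpow substitution : T = α⁻¹ * B
  have hrpow := integral_comp_rpow_Ioi_of_pos
    (g := fun u : ℝ => α⁻¹ * (u ^ (2/α - 1) * (1 - (u / (1 + u)) ^ m))) hα0
  have hcongr2 : ∀ x ∈ Set.Ioi (0:ℝ),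
      (α * x ^ (α - 1)) • (α⁻¹ * ((x ^ α) ^ (2/α - 1) * (1 - (x ^ α / (1 + x ^ α)) ^ m)))
        = x * (1 - (x ^ α / (1 + x ^ α)) ^ m) := by
    intro x hx
    have hx0 : (0:ℝ) < x := hx
    have e : (x ^ α) ^ (2/α - 1) = x ^ (2 - α) := by
      rw [← Real.rpow_mul hx0.le]
      congr 1
      field_simp
    have e2 : x ^ (α - 1) * x ^ (2 - α) = x := by
      rw [← Real.rpow_add hx0, show α - 1 + (2 - α) = (1:ℝ) by ring, Real.rpow_one]
    rw [smul_eq_mul, e]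
    calc α * x ^ (α - 1) * (α⁻¹ * (x ^ (2 - α) * (1 - (x ^ α / (1 + x ^ α)) ^ m)))
        = (α * α⁻¹) * ((x ^ (α - 1) * x ^ (2 - α)) * (1 - (x ^ α / (1 + x ^ α)) ^ m)) := by
          ring
    _ = x * (1 - (x ^ α / (1 + x ^ α)) ^ m) := by
          rw [mul_inv_cancel₀ hα0.ne', e2, one_mul]
  rw [setIntegral_congr_fun measurableSet_Ioi hcongr2, ← hT, integral_const_mul] at hrpow
  rw [(B_value (2/α) hp0 hp1 m hm).2] at hrpow
  rw [hJT, hrpow, hbdef, ← Real.rpow_add hs, show 1/α + 1/α = 2/α by ring]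
  have hΓm : Real.Gamma (m:ℝ) ≠ 0 :=
    (Real.Gamma_pos_of_pos (by exact_mod_cast hm : (0:ℝ) < (m:ℝ))).ne'
  field_simp



private abbrev E2 := EuclideanSpace ℝ (Fin 2)

private lemma ball_finite (R : ℝ) :
    IsFiniteMeasure (volume.restrict (Metric.ball (0:E2) R)) :=
  ⟨by rw [Measure.restrict_apply_univ]; exact measure_ball_lt_top⟩

/-- Fubini/translation: the averaged tail integral. -/
private lemma fubini_step (R : ℝ) (hR : 0 < R) (q : E2 → ℝ)
    (hqc : Continuous q) (hq1 : ∀ z, q z ∈ Set.Icc (0:ℝ) 1)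
    (hqi : Integrable (fun z => 1 - q z)) :
    Integrable (fun y : E2 => ∫ x in Metric.ball (0:E2) R, (1 - q (x - y))) ∧
    ∫ y : E2, (∫ x in Metric.ball (0:E2) R, (1 - q (x - y)))
      = (volume (Metric.ball (0:E2) R)).toReal * ∫ z : E2, (1 - q z) := by
  haveI := ball_finite R
  set B := Metric.ball (0:E2) R with hB
  have hmeas : AEStronglyMeasurable (fun p : E2 × E2 => 1 - q (p.1 - p.2))
      ((volume.restrict B).prod volume) :=
    (continuous_const.sub (hqc.comp (continuous_fst.sub continuous_snd))).aestronglyMeasurable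
  have hinner : ∀ x : E2, Integrable (fun y => 1 - q (x - y)) volume :=
    fun x => (integrable_comp_sub_left (fun z => 1 - q z) x).mpr hqi
  have hinner_val : ∀ x : E2, ∫ y, (1 - q (x - y)) = ∫ z : E2, (1 - q z) :=
    fun x => integral_sub_left_eq_self (fun z => 1 - q z) volume x
  have hF : Integrable (fun p : E2 × E2 => 1 - q (p.1 - p.2))
      ((volume.restrict B).prod volume) := by
    rw [integrable_prod_iff hmeas]
    refine ⟨Filter.Eventually.of_forall (fun x => hinner x), ?_⟩
    have : ∀ x : E2, (∫ y, ‖1 - q (x - y)‖) = ∫ z : E2, (1 - q z) := by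
      intro x
      rw [← hinner_val x]
      refine integral_congr_ae (Filter.Eventually.of_forall (fun y => ?_))
      show ‖1 - q (x - y)‖ = 1 - q (x - y)
      rw [Real.norm_eq_abs, abs_of_nonneg]
      have := (hq1 (x - y)).2
      linarith
    simp_rw [this]
    exact integrable_const _
  constructor
  · exact hF.integral_prod_right
  · rw [← integral_integral_swap (f := fun x y : E2 => 1 - q (x - y)) hF]
    simp_rw [hinner_val]
    rw [integral_const, measureReal_restrict_apply_univ, smul_eq_mul, measureReal_def]




private lemma ball_int (R : ℝ) (u : E2 → ℝ) (huc : Continuous u)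
    (hu : ∀ x, u x ∈ Set.Icc (0:ℝ) 1) :
    IntegrableOn u (Metric.ball (0:E2) R) := by
  haveI := ball_finite R
  refine Integrable.mono' (integrable_const 1) huc.aestronglyMeasurable.restrict
    (Filter.Eventually.of_forall (fun x => ?_))
  rw [Real.norm_eq_abs, abs_of_nonneg (hu x).1]
  exact (hu x).2

private lemma jensen_step (R : ℝ) (hR : 0 < R) (K : ℕ) (u : E2 → ℝ)
    (huc : Continuous u) (hu : ∀ x, u x ∈ Set.Icc (0:ℝ) 1) :
    ((volume (Metric.ball (0:E2) R)).toReal⁻¹ * ∫ x in Metric.ball (0:E2) R, u x) ^ K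
      ≤ (volume (Metric.ball (0:E2) R)).toReal⁻¹
        * ∫ x in Metric.ball (0:E2) R, (u x) ^ K := by
  have hconv : ConvexOn ℝ (Set.Icc (0:ℝ) 1) (fun t : ℝ => t ^ K) :=
    (convexOn_pow K).subset Set.Icc_subset_Ici_self (convex_Icc 0 1)
  have h := hconv.map_set_average_le (t := Metric.ball (0:E2) R)
    (continuous_pow K).continuousOn isClosed_Icc
    (Metric.measure_ball_pos volume 0 hR).ne' measure_ball_lt_top.ne
    (Filter.Eventually.of_forall (fun x => hu x))
    (ball_int R u huc hu)
    (ball_int R (fun x => (u x) ^ K) (huc.pow K)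
      (fun x => ⟨pow_nonneg (hu x).1 K, pow_le_one₀ (hu x).1 (hu x).2⟩))
  rw [setAverage_eq, setAverage_eq, smul_eq_mul, smul_eq_mul] at h
  exact h

private lemma cont_int (R : ℝ) (n : ℕ) (g : E2 → ℝ) (hgc : Continuous g)
    (hg : ∀ z, g z ∈ Set.Icc (0:ℝ) 1) :
    Continuous fun y : E2 => ∫ x in Metric.ball (0:E2) R, (g (x - y)) ^ n := by
  haveI := ball_finite R
  refine continuous_of_dominated (bound := fun _ => (1:ℝ)) ?_ ?_ (integrable_const 1) ?_
  · intro y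
    exact (((hgc.comp (continuous_id.sub continuous_const)).pow n)).aestronglyMeasurable.restrict
  · intro y
    refine Filter.Eventually.of_forall (fun x => ?_)
    rw [Real.norm_eq_abs, abs_of_nonneg (pow_nonneg (hg (x - y)).1 n)]
    exact pow_le_one₀ (hg (x - y)).1 (hg (x - y)).2
  · refine Filter.Eventually.of_forall (fun x => ?_)
    exact (hgc.comp (continuous_const.sub continuous_id)).pow n

private lemma vol_ball (R : ℝ) (hR : 0 < R) :
    (volume (Metric.ball (0 : E2) R)).toReal = π * R ^ 2 := by
  rw [EuclideanSpace.volume_ball]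
  simp only [Fintype.card_fin]
  rw [show ((2:ℕ):ℝ) / 2 + 1 = 2 by norm_num, Real.Gamma_two, div_one,
    sq_sqrt Real.pi_nonneg]
  rw [ENNReal.toReal_mul, ENNReal.toReal_pow, ENNReal.toReal_ofReal hR.le,
    ENNReal.toReal_ofReal Real.pi_nonneg]
  ring

/-- Lemma 1, eq. (9): the inter-cluster Laplace transform is bounded by
exp(-λ_p s^{2/α} Γ(K N_s + 2/α) Γ(1 - 2/α)/Γ(K N_s)). -/
theorem inter_cluster_laplace_bound (α s lam R : ℝ) (hα : 2 < α) (hs : 0 < s)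
    (hlam : 0 < lam) (hR : 0 < R) (K Ns : ℕ) (hK : 1 ≤ K) (hNs : 1 ≤ Ns) :
    Real.exp (-lam * ∫ y : EuclideanSpace ℝ (Fin 2),
        (1 - ((1 / (Real.pi * R ^ 2)) *
          ∫ x in Metric.ball (0 : EuclideanSpace ℝ (Fin 2)) R,
            (‖x - y‖ ^ α / (s + ‖x - y‖ ^ α)) ^ Ns) ^ K)) ≤
      Real.exp (-lam * s ^ (2 / α) *
        Real.Gamma ((K : ℝ) * (Ns : ℝ) + 2 / α) * Real.Gamma (1 - 2 / α) /
        Real.Gamma ((K : ℝ) * (Ns : ℝ))) := by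
  have hα0 : (0:ℝ) < α := by linarith
  set g : E2 → ℝ := fun z => ‖z‖ ^ α / (s + ‖z‖ ^ α) with hgdef
  have hgc : Continuous g := ratio_cont α s hα hs
  have hgmem : ∀ z, g z ∈ Set.Icc (0:ℝ) 1 := ratio_mem α s hs
  set m : ℕ := Ns * K with hmdef
  have hm1 : 1 ≤ m := Nat.mul_pos hNs hK
  set B := Metric.ball (0:E2) R with hBdef
  haveI := ball_finite R
  have hV : (volume B).toReal = π * R ^ 2 := vol_ball R hR
  have hVpos : (0:ℝ) < π * R ^ 2 := by positivity
  have hgNs : ∀ z, g z ^ Ns ∈ Set.Icc (0:ℝ) 1 := fun z =>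
    ⟨pow_nonneg (hgmem z).1 _, pow_le_one₀ (hgmem z).1 (hgmem z).2⟩
  have hgm : ∀ z, g z ^ m ∈ Set.Icc (0:ℝ) 1 := fun z =>
    ⟨pow_nonneg (hgmem z).1 _, pow_le_one₀ (hgmem z).1 (hgmem z).2⟩
  have hxyc : ∀ (y : E2) (n : ℕ), Continuous fun x : E2 => g (x - y) ^ n := fun y n =>
    (hgc.comp (continuous_id.sub continuous_const)).pow n
  have hxym : ∀ (y : E2) (n : ℕ) (x : E2), g (x - y) ^ n ∈ Set.Icc (0:ℝ) 1 := fun y n x =>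
    ⟨pow_nonneg (hgmem _).1 _, pow_le_one₀ (hgmem _).1 (hgmem _).2⟩
  have hFubNs := fubini_step R hR (fun z => g z ^ Ns) (hgc.pow Ns) hgNs
    (planar_integrable α s hα hs Ns)
  have hFubm := fubini_step R hR (fun z => g z ^ m) (hgc.pow m) hgm
    (planar_integrable α s hα hs m)
  have hsplit : ∀ (n : ℕ) (y : E2), (∫ x in B, (1 - g (x - y) ^ n))
      = π * R ^ 2 - ∫ x in B, g (x - y) ^ n := by
    intro n y
    have h1 : IntegrableOn (fun x : E2 => g (x - y) ^ n) B :=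
      ball_int R _ (hxyc y n) (hxym y n)
    rw [integral_sub (integrable_const 1) h1, setIntegral_const, smul_eq_mul, mul_one, measureReal_def, hV]
  have hrange : ∀ y : E2, (0:ℝ) ≤ (∫ x in B, g (x - y) ^ Ns) ∧
      (∫ x in B, g (x - y) ^ Ns) ≤ π * R ^ 2 := by
    intro y
    constructor
    · exact setIntegral_nonneg measurableSet_ball
        (fun x _ => pow_nonneg (hgmem _).1 _)
    · calc (∫ x in B, g (x - y) ^ Ns) ≤ ∫ _x in B, (1:ℝ) :=
          integral_mono (ball_int R _ (hxyc y Ns) (hxym y Ns)) (integrable_const 1)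
            (fun x => pow_le_one₀ (hgmem _).1 (hgmem _).2)
      _ = π * R ^ 2 := by rw [setIntegral_const, smul_eq_mul, mul_one, measureReal_def, hV]
  have hJen : ∀ y : E2, ((1 / (π * R ^ 2)) * ∫ x in B, g (x - y) ^ Ns) ^ K
      ≤ (1 / (π * R ^ 2)) * ∫ x in B, g (x - y) ^ m := by
    intro y
    have h : (((volume B).toReal)⁻¹ * ∫ x in B, g (x - y) ^ Ns) ^ K
        ≤ ((volume B).toReal)⁻¹ * ∫ x in B, (g (x - y) ^ Ns) ^ K :=
      jensen_step R hR K (fun x => g (x - y) ^ Ns) (hxyc y Ns) (hxym y Ns)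
    have hcongr : (∫ x in B, (g (x - y) ^ Ns) ^ K) = ∫ x in B, g (x - y) ^ m := by
      refine setIntegral_congr_fun measurableSet_ball (fun x _ => ?_)
      rw [← pow_mul]
    rw [hcongr, hV, ← one_div] at h
    exact h
  have hlow : ∀ y : E2, (1 / (π * R ^ 2)) * (∫ x in B, (1 - g (x - y) ^ m))
      ≤ 1 - ((1 / (π * R ^ 2)) * ∫ x in B, g (x - y) ^ Ns) ^ K := by
    intro y
    rw [hsplit m y]
    have hx : (1 / (π * R ^ 2)) * (π * R ^ 2 - ∫ x in B, g (x - y) ^ m)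
        = 1 - (1 / (π * R ^ 2)) * ∫ x in B, g (x - y) ^ m := by
      field_simp
    rw [hx]
    linarith [hJen y]
  have hamem : ∀ y : E2, (0:ℝ) ≤ (1 / (π * R ^ 2)) * ∫ x in B, g (x - y) ^ Ns ∧
      (1 / (π * R ^ 2)) * (∫ x in B, g (x - y) ^ Ns) ≤ 1 := by
    intro y
    obtain ⟨h0, h1⟩ := hrange y
    constructor
    · positivity
    · have h2 := mul_le_mul_of_nonneg_left h1 (le_of_lt (by positivity : (0:ℝ) < 1 / (π * R ^ 2)))
      calc (1 / (π * R ^ 2)) * (∫ x in B, g (x - y) ^ Ns)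
          ≤ (1 / (π * R ^ 2)) * (π * R ^ 2) := h2
      _ = 1 := by field_simp
  have hpos : ∀ y : E2,
      (0:ℝ) ≤ 1 - ((1 / (π * R ^ 2)) * ∫ x in B, g (x - y) ^ Ns) ^ K := by
    intro y
    obtain ⟨h0, h1⟩ := hamem y
    have := pow_le_one₀ (n := K) h0 h1
    linarith
  have hup : ∀ y : E2, 1 - ((1 / (π * R ^ 2)) * ∫ x in B, g (x - y) ^ Ns) ^ K
      ≤ ((K:ℝ) * (1 / (π * R ^ 2))) * (∫ x in B, (1 - g (x - y) ^ Ns)) := by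
    intro y
    obtain ⟨h0, h1⟩ := hamem y
    have h2 := one_sub_pow_le' K _ h0 h1
    rw [hsplit Ns y]
    have hx : (1:ℝ) - (1 / (π * R ^ 2)) * (∫ x in B, g (x - y) ^ Ns)
        = (1 / (π * R ^ 2)) * (π * R ^ 2 - ∫ x in B, g (x - y) ^ Ns) := by
      field_simp
    calc 1 - ((1 / (π * R ^ 2)) * ∫ x in B, g (x - y) ^ Ns) ^ K
        ≤ (K:ℝ) * (1 - (1 / (π * R ^ 2)) * ∫ x in B, g (x - y) ^ Ns) := h2
    _ = ((K:ℝ) * (1 / (π * R ^ 2))) * (π * R ^ 2 - ∫ x in B, g (x - y) ^ Ns) := by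
        rw [hx]; ring
  have hΦc : Continuous (fun y : E2 =>
      1 - ((1 / (π * R ^ 2)) * ∫ x in B, g (x - y) ^ Ns) ^ K) :=
    continuous_const.sub ((continuous_const.mul (cont_int R Ns g hgc hgmem)).pow K)
  have hΦint : Integrable (fun y : E2 =>
      1 - ((1 / (π * R ^ 2)) * ∫ x in B, g (x - y) ^ Ns) ^ K) := by
    refine Integrable.mono' (hFubNs.1.const_mul ((K:ℝ) * (1 / (π * R ^ 2))))
      hΦc.aestronglyMeasurable (Filter.Eventually.of_forall (fun y => ?_))
    rw [Real.norm_eq_abs, abs_of_nonneg (hpos y)]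
    exact hup y
  have hmono : (∫ y : E2, (1 / (π * R ^ 2)) * (∫ x in B, (1 - g (x - y) ^ m)))
      ≤ ∫ y : E2, (1 - ((1 / (π * R ^ 2)) * ∫ x in B, g (x - y) ^ Ns) ^ K) :=
    integral_mono (hFubm.1.const_mul _) hΦint hlow
  have hval : (∫ y : E2, (1 / (π * R ^ 2)) * (∫ x in B, (1 - g (x - y) ^ m)))
      = π * (s ^ (2/α) *
        (Real.Gamma ((m:ℝ) + 2/α) * Real.Gamma (1 - 2/α) / Real.Gamma (m:ℝ))) := by
    rw [integral_const_mul, hFubm.2, hV, planar_value α s hα hs m hm1]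
    field_simp
  have hΓa : 0 < Real.Gamma ((m:ℝ) + 2/α) := Real.Gamma_pos_of_pos (by positivity)
  have hΓb : 0 < Real.Gamma (1 - 2/α) := Real.Gamma_pos_of_pos (by
    have : 2/α < 1 := by rw [div_lt_one hα0]; linarith
    linarith)
  have hΓc : 0 < Real.Gamma ((m:ℝ)) := Real.Gamma_pos_of_pos (by
    exact_mod_cast Nat.lt_of_lt_of_le Nat.zero_lt_one hm1)
  have hπ : (1:ℝ) ≤ π := by linarith [Real.pi_gt_three]
  have hC : s ^ (2/α) *
      (Real.Gamma ((m:ℝ) + 2/α) * Real.Gamma (1 - 2/α) / Real.Gamma (m:ℝ))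
      ≤ ∫ y : E2, (1 - ((1 / (π * R ^ 2)) * ∫ x in B, g (x - y) ^ Ns) ^ K) := by
    refine le_trans ?_ (hval ▸ hmono)
    have hX : (0:ℝ) ≤ s ^ (2/α) *
        (Real.Gamma ((m:ℝ) + 2/α) * Real.Gamma (1 - 2/α) / Real.Gamma (m:ℝ)) := by
      positivity
    nlinarith [hX]
  rw [Real.exp_le_exp]
  have hcast : (K : ℝ) * (Ns : ℝ) = ((m:ℕ):ℝ) := by rw [hmdef]; push_cast; ring
  rw [hcast]
  rw [show -lam * s ^ (2/α) * Real.Gamma ((m:ℝ) + 2/α) * Real.Gamma (1 - 2/α)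
        / Real.Gamma ((m:ℝ))
      = -(lam * (s ^ (2/α) * (Real.Gamma ((m:ℝ) + 2/α) * Real.Gamma (1 - 2/α)
        / Real.Gamma ((m:ℝ))))) by ring, neg_mul]
  exact neg_le_neg (mul_le_mul_of_nonneg_left hC hlam.le)
end planar
end

section
/- For α > 2, R > 0, s > 0, and integers K ≥ 1, N_s ≥ 1, the double integral ∫_{ℝ²} [1 - ((1/(πR²)) ∫_{B(o,R)} (‖x-y‖^α/(s+‖x-y‖^α))^{N_s} dx)^K] dy is finite. -/
open MeasureTheory Real

private lemma one_sub_pow_le_aux {t : ℝ} (h0 : 0 ≤ t) (h1 : t ≤ 1) (n : ℕ) :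
    1 - t ^ n ≤ n * (1 - t) := by
  have h := one_add_mul_le_pow (a := t - 1) (by linarith) n
  have he : (1 : ℝ) + (t - 1) = t := by ring
  rw [he] at h
  nlinarith

/-- Finiteness of the exponent in the Poisson-cluster PGF: the function
y ↦ 1 - ((1/(πR²)) ∫_{B(o,R)} (‖x-y‖^α/(s+‖x-y‖^α))^{N_s} dx)^K is
integrable over ℝ². -/
theorem cluster_pgf_exponent_integrable (α R s : ℝ) (hα : 2 < α) (hR : 0 < R)
    (hs : 0 < s) (K Ns : ℕ) (hK : 1 ≤ K) (hNs : 1 ≤ Ns) :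
    Integrable (fun y : EuclideanSpace ℝ (Fin 2) =>
      1 - ((1 / (Real.pi * R ^ 2)) *
        ∫ x in Metric.ball (0 : EuclideanSpace ℝ (Fin 2)) R,
          (‖x - y‖ ^ α / (s + ‖x - y‖ ^ α)) ^ Ns) ^ K) := by
  have hα0 : (0 : ℝ) < α := by linarith
  have hπR : (0 : ℝ) < Real.pi * R ^ 2 := by positivity
  set B := Metric.ball (0 : EuclideanSpace ℝ (Fin 2)) R with hB
  -- volume of the ball
  have hvol : volume B = ENNReal.ofReal (Real.pi * R ^ 2) := by
    rw [hB, EuclideanSpace.volume_ball]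
    simp only [Fintype.card_fin]
    rw [show ((2 : ℕ) : ℝ) / 2 + 1 = 2 by norm_num, Real.Gamma_two,
      Real.sq_sqrt Real.pi_nonneg, div_one, ← ENNReal.ofReal_pow hR.le,
      ← ENNReal.ofReal_mul (by positivity)]
    ring_nf
  have hvolR : (volume B).toReal = Real.pi * R ^ 2 := by
    rw [hvol, ENNReal.toReal_ofReal hπR.le]
  -- basic bounds on the fraction
  have hfrac : ∀ r : ℝ, 0 ≤ r → 0 ≤ r ^ α / (s + r ^ α) ∧ r ^ α / (s + r ^ α) ≤ 1 := by
    intro r hr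
    have h1 : 0 ≤ r ^ α := Real.rpow_nonneg hr α
    have h2 : 0 < s + r ^ α := by linarith
    exact ⟨by positivity, by rw [div_le_one h2]; linarith⟩
  -- integrability of the inner integrand, for each y
  have hcont : ∀ y : EuclideanSpace ℝ (Fin 2),
      Continuous (fun x : EuclideanSpace ℝ (Fin 2) =>
        (‖x - y‖ ^ α / (s + ‖x - y‖ ^ α)) ^ Ns) := by
    intro y
    have h1 : Continuous fun x : EuclideanSpace ℝ (Fin 2) => ‖x - y‖ ^ α :=
      (continuous_norm.comp (continuous_id.sub continuous_const)).rpow_const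
        fun x => Or.inr hα0.le
    exact (h1.div (continuous_const.add h1) fun x => by
      have := Real.rpow_nonneg (norm_nonneg (x - y)) α; exact (by linarith : (0:ℝ) < s + ‖x - y‖ ^ α).ne').pow Ns
  have hint : ∀ y : EuclideanSpace ℝ (Fin 2),
      IntegrableOn (fun x : EuclideanSpace ℝ (Fin 2) =>
        (‖x - y‖ ^ α / (s + ‖x - y‖ ^ α)) ^ Ns) B := by
    intro y
    refine Integrable.mono' (g := fun _ => (1 : ℝ)) (integrableOn_const ?_)
      (hcont y).aestronglyMeasurable (Filter.Eventually.of_forall fun x => ?_)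
    · rw [hvol]; exact ENNReal.ofReal_ne_top
    · obtain ⟨h0, h1⟩ := hfrac ‖x - y‖ (norm_nonneg _)
      rw [Real.norm_eq_abs, abs_of_nonneg (pow_nonneg h0 Ns)]
      exact pow_le_one₀ h0 h1
  -- the inner integral lies in [0, π R²]
  have hI0 : ∀ y, 0 ≤ ∫ x in B, (‖x - y‖ ^ α / (s + ‖x - y‖ ^ α)) ^ Ns := fun y =>
    setIntegral_nonneg Metric.isOpen_ball.measurableSet fun x _ =>
      pow_nonneg (hfrac ‖x - y‖ (norm_nonneg _)).1 Ns
  have hI1 : ∀ y, (∫ x in B, (‖x - y‖ ^ α / (s + ‖x - y‖ ^ α)) ^ Ns) ≤ Real.pi * R ^ 2 := by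
    intro y
    calc (∫ x in B, (‖x - y‖ ^ α / (s + ‖x - y‖ ^ α)) ^ Ns)
        ≤ ∫ _x in B, (1 : ℝ) := by
          refine setIntegral_mono_on (hint y)
            (integrableOn_const (by rw [hvol]; exact ENNReal.ofReal_ne_top))
            Metric.isOpen_ball.measurableSet fun x _ =>
            pow_le_one₀ (hfrac ‖x - y‖ (norm_nonneg _)).1 (hfrac ‖x - y‖ (norm_nonneg _)).2
      _ = Real.pi * R ^ 2 := by rw [setIntegral_const, smul_eq_mul, mul_one, measureReal_def, hvolR]
  -- the average lies in [0,1]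
  have havg : ∀ y, 0 ≤ (1 / (Real.pi * R ^ 2)) *
        (∫ x in B, (‖x - y‖ ^ α / (s + ‖x - y‖ ^ α)) ^ Ns) ∧
      (1 / (Real.pi * R ^ 2)) *
        (∫ x in B, (‖x - y‖ ^ α / (s + ‖x - y‖ ^ α)) ^ Ns) ≤ 1 := by
    intro y
    constructor
    · exact mul_nonneg (by positivity) (hI0 y)
    · rw [one_div, inv_mul_le_iff₀ hπR, mul_one]
      exact hI1 y
  -- nonnegativity and upper bound 1 for the full integrand
  have hf01 : ∀ y, 0 ≤ 1 - ((1 / (Real.pi * R ^ 2)) *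
        ∫ x in B, (‖x - y‖ ^ α / (s + ‖x - y‖ ^ α)) ^ Ns) ^ K ∧
      1 - ((1 / (Real.pi * R ^ 2)) *
        ∫ x in B, (‖x - y‖ ^ α / (s + ‖x - y‖ ^ α)) ^ Ns) ^ K ≤ 1 := by
    intro y
    obtain ⟨h0, h1⟩ := havg y
    constructor
    · have := pow_le_one₀ (n := K) h0 h1; linarith
    · have := pow_nonneg h0 K; linarith
  -- decay bound for large y
  have hdecay : ∀ y : EuclideanSpace ℝ (Fin 2), 2 * R + 1 ≤ ‖y‖ →
      1 - ((1 / (Real.pi * R ^ 2)) *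
          ∫ x in B, (‖x - y‖ ^ α / (s + ‖x - y‖ ^ α)) ^ Ns) ^ K ≤
        (K : ℝ) * Ns * s * (2 : ℝ) ^ α * (1 + ‖y‖) ^ (-α) := by
    intro y hy
    set c : ℝ := Ns * (s * (2 : ℝ) ^ α * (1 + ‖y‖) ^ (-α)) with hc
    have hy0 : (0 : ℝ) < 1 + ‖y‖ := by positivity
    have hhalf : (1 + ‖y‖) / 2 ≤ ‖y‖ - R := by linarith
    have hhalf0 : (0 : ℝ) < (1 + ‖y‖) / 2 := by positivity
    -- pointwise bound on the ball
    have hpt : ∀ x ∈ B, 1 - (‖x - y‖ ^ α / (s + ‖x - y‖ ^ α)) ^ Ns ≤ c := by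
      intro x hx
      obtain ⟨h0, h1⟩ := hfrac ‖x - y‖ (norm_nonneg _)
      have hr : (1 + ‖y‖) / 2 ≤ ‖x - y‖ := by
        have hxR : ‖x‖ < R := by simp only [hB, Metric.mem_ball, dist_zero_right] at hx; exact hx
        have : ‖y‖ - ‖x‖ ≤ ‖x - y‖ := by
          rw [norm_sub_rev]; exact norm_sub_norm_le y x
        linarith
      have hrp : ((1 + ‖y‖) / 2) ^ α ≤ ‖x - y‖ ^ α :=
        Real.rpow_le_rpow hhalf0.le hr hα0.le
      have hrp0 : (0 : ℝ) < ((1 + ‖y‖) / 2) ^ α := Real.rpow_pos_of_pos hhalf0 α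
      have hden : (0 : ℝ) < s + ‖x - y‖ ^ α := by
        have := Real.rpow_nonneg (norm_nonneg (x - y)) α; linarith
      have step1 : 1 - (‖x - y‖ ^ α / (s + ‖x - y‖ ^ α)) ^ Ns ≤
          Ns * (1 - ‖x - y‖ ^ α / (s + ‖x - y‖ ^ α)) := one_sub_pow_le_aux h0 h1 Ns
      have step2 : 1 - ‖x - y‖ ^ α / (s + ‖x - y‖ ^ α) = s / (s + ‖x - y‖ ^ α) := by
        field_simp
        ring
      have step3 : s / (s + ‖x - y‖ ^ α) ≤ s / ((1 + ‖y‖) / 2) ^ α := by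
        apply div_le_div_of_nonneg_left hs.le hrp0
        linarith
      have step4 : s / ((1 + ‖y‖) / 2) ^ α = s * (2 : ℝ) ^ α * (1 + ‖y‖) ^ (-α) := by
        rw [Real.div_rpow hy0.le (by norm_num : (0:ℝ) ≤ 2), Real.rpow_neg hy0.le]
        have h2α : (0 : ℝ) < (2 : ℝ) ^ α := Real.rpow_pos_of_pos (by norm_num) α
        have hyα : (0 : ℝ) < (1 + ‖y‖) ^ α := Real.rpow_pos_of_pos hy0 α
        field_simp
      rw [hc]
      calc 1 - (‖x - y‖ ^ α / (s + ‖x - y‖ ^ α)) ^ Ns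
          ≤ Ns * (1 - ‖x - y‖ ^ α / (s + ‖x - y‖ ^ α)) := step1
        _ ≤ Ns * (s * (2 : ℝ) ^ α * (1 + ‖y‖) ^ (-α)) := by
            rw [step2]
            exact mul_le_mul_of_nonneg_left (step4 ▸ step3) (Nat.cast_nonneg Ns)
    have hc0 : 0 ≤ c := by
      rw [hc]
      have h2α : (0 : ℝ) ≤ (2 : ℝ) ^ α := (Real.rpow_pos_of_pos (by norm_num) α).le
      have hyα : (0 : ℝ) ≤ (1 + ‖y‖) ^ (-α) := Real.rpow_nonneg hy0.le _
      positivity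
    -- bound the integral of 1 - φ
    have hIsub : (Real.pi * R ^ 2) - (∫ x in B, (‖x - y‖ ^ α / (s + ‖x - y‖ ^ α)) ^ Ns) ≤
        (Real.pi * R ^ 2) * c := by
      have hconst : IntegrableOn (fun _ : EuclideanSpace ℝ (Fin 2) => (1 : ℝ)) B :=
        integrableOn_const (by rw [hvol]; exact ENNReal.ofReal_ne_top)
      have hsub : (∫ x in B, (1 - (‖x - y‖ ^ α / (s + ‖x - y‖ ^ α)) ^ Ns)) =
          (Real.pi * R ^ 2) - (∫ x in B, (‖x - y‖ ^ α / (s + ‖x - y‖ ^ α)) ^ Ns) := by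
        rw [integral_sub hconst (hint y), setIntegral_const, smul_eq_mul, mul_one, measureReal_def, hvolR]
      rw [← hsub]
      calc (∫ x in B, (1 - (‖x - y‖ ^ α / (s + ‖x - y‖ ^ α)) ^ Ns))
          ≤ ∫ _x in B, c := by
            refine setIntegral_mono_on (hconst.sub (hint y))
              (integrableOn_const (by rw [hvol]; exact ENNReal.ofReal_ne_top))
              Metric.isOpen_ball.measurableSet hpt
        _ = (Real.pi * R ^ 2) * c := by rw [setIntegral_const, smul_eq_mul, measureReal_def, hvolR]
    -- now assemble
    obtain ⟨h0, h1⟩ := havg y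
    calc 1 - ((1 / (Real.pi * R ^ 2)) *
            ∫ x in B, (‖x - y‖ ^ α / (s + ‖x - y‖ ^ α)) ^ Ns) ^ K
        ≤ K * (1 - (1 / (Real.pi * R ^ 2)) *
            ∫ x in B, (‖x - y‖ ^ α / (s + ‖x - y‖ ^ α)) ^ Ns) := one_sub_pow_le_aux h0 h1 K
      _ ≤ K * c := by
          refine mul_le_mul_of_nonneg_left ?_ (Nat.cast_nonneg K)
          have : 1 - (1 / (Real.pi * R ^ 2)) *
              (∫ x in B, (‖x - y‖ ^ α / (s + ‖x - y‖ ^ α)) ^ Ns) =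
              (1 / (Real.pi * R ^ 2)) * ((Real.pi * R ^ 2) -
                (∫ x in B, (‖x - y‖ ^ α / (s + ‖x - y‖ ^ α)) ^ Ns)) := by
            field_simp
          rw [this]
          calc (1 / (Real.pi * R ^ 2)) * ((Real.pi * R ^ 2) -
                (∫ x in B, (‖x - y‖ ^ α / (s + ‖x - y‖ ^ α)) ^ Ns))
              ≤ (1 / (Real.pi * R ^ 2)) * ((Real.pi * R ^ 2) * c) :=
                mul_le_mul_of_nonneg_left hIsub (by positivity)
            _ = c := by field_simp
      _ = (K : ℝ) * Ns * s * (2 : ℝ) ^ α * (1 + ‖y‖) ^ (-α) := by rw [hc]; ring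
  -- measurability of the whole function
  have hmeas : AEStronglyMeasurable (fun y : EuclideanSpace ℝ (Fin 2) =>
      1 - ((1 / (Real.pi * R ^ 2)) *
        ∫ x in B, (‖x - y‖ ^ α / (s + ‖x - y‖ ^ α)) ^ Ns) ^ K) volume := by
    have hsm : StronglyMeasurable (fun y : EuclideanSpace ℝ (Fin 2) =>
        ∫ x in B, (‖x - y‖ ^ α / (s + ‖x - y‖ ^ α)) ^ Ns) := by
      apply MeasureTheory.StronglyMeasurable.integral_prod_right
        (f := fun (y x : EuclideanSpace ℝ (Fin 2)) =>
          (‖x - y‖ ^ α / (s + ‖x - y‖ ^ α)) ^ Ns)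
      apply Continuous.stronglyMeasurable
      have h1 : Continuous fun p : EuclideanSpace ℝ (Fin 2) × EuclideanSpace ℝ (Fin 2) =>
          ‖p.2 - p.1‖ ^ α :=
        (continuous_norm.comp (continuous_snd.sub continuous_fst)).rpow_const
          fun p => Or.inr hα0.le
      exact (h1.div (continuous_const.add h1) fun p => by
        have := Real.rpow_nonneg (norm_nonneg (p.2 - p.1)) α; exact (by linarith : (0:ℝ) < s + ‖p.2 - p.1‖ ^ α).ne').pow Ns
    exact ((stronglyMeasurable_const.sub
      (((stronglyMeasurable_const.mul hsm)).pow K))).aestronglyMeasurable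
  -- dominating function
  set C : ℝ := (2 * R + 2) ^ α + (K : ℝ) * Ns * s * (2 : ℝ) ^ α with hCdef
  have h2α : (0 : ℝ) < (2 : ℝ) ^ α := Real.rpow_pos_of_pos (by norm_num) α
  have hterm2 : (0 : ℝ) ≤ (K : ℝ) * Ns * s * (2 : ℝ) ^ α := by positivity
  have hterm1 : (0 : ℝ) ≤ (2 * R + 2) ^ α := (Real.rpow_pos_of_pos (by linarith) α).le
  have hgint : Integrable (fun y : EuclideanSpace ℝ (Fin 2) => C * (1 + ‖y‖) ^ (-α)) := by
    have h := integrable_one_add_norm (E := EuclideanSpace ℝ (Fin 2)) (μ := volume) (r := α)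
      (by rw [finrank_euclideanSpace, Fintype.card_fin]; exact_mod_cast hα)
    exact h.const_mul C
  refine hgint.mono' hmeas (Filter.Eventually.of_forall fun y => ?_)
  have hy0 : (0 : ℝ) < 1 + ‖y‖ := by positivity
  have hyα : (0 : ℝ) < (1 + ‖y‖) ^ (-α) := Real.rpow_pos_of_pos hy0 _
  obtain ⟨h0, h1⟩ := hf01 y
  rw [Real.norm_eq_abs, abs_of_nonneg h0]
  rcases le_or_gt (2 * R + 1) ‖y‖ with hcase | hcase
  · calc 1 - ((1 / (Real.pi * R ^ 2)) *
          ∫ x in B, (‖x - y‖ ^ α / (s + ‖x - y‖ ^ α)) ^ Ns) ^ K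
        ≤ (K : ℝ) * Ns * s * (2 : ℝ) ^ α * (1 + ‖y‖) ^ (-α) := hdecay y hcase
      _ ≤ C * (1 + ‖y‖) ^ (-α) := by
          apply mul_le_mul_of_nonneg_right _ hyα.le
          rw [hCdef]; linarith
  · have hle : (1 + ‖y‖) ^ α ≤ (2 * R + 2) ^ α :=
      Real.rpow_le_rpow hy0.le (by linarith) hα0.le
    have h1le : (1 : ℝ) ≤ (2 * R + 2) ^ α * (1 + ‖y‖) ^ (-α) := by
      rw [Real.rpow_neg hy0.le, ← div_eq_mul_inv, le_div_iff₀ (Real.rpow_pos_of_pos hy0 α),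
        one_mul]
      exact hle
    calc 1 - ((1 / (Real.pi * R ^ 2)) *
          ∫ x in B, (‖x - y‖ ^ α / (s + ‖x - y‖ ^ α)) ^ Ns) ^ K
        ≤ 1 := h1
      _ ≤ (2 * R + 2) ^ α * (1 + ‖y‖) ^ (-α) := h1le
      _ ≤ C * (1 + ‖y‖) ^ (-α) := by
          apply mul_le_mul_of_nonneg_right _ hyα.le
          rw [hCdef]; linarith
end
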